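/- arXiv:math/0611257 — 7 statements merged into one kernel-verified Lean document; each statement's English description precedes it below -/
import Mathlib

section
/- Let (Ω, F, P) be a probability space with a filtration F_0 ⊆ F_1 ⊆ … ⊆ F_{K+1} ⊆ F, and for l = 0,…,K let L¹_l and L²_l be nonnegative integrable random variables that are F_{l+1}-measurable and satisfy E(L¹_l | F_l) = 1 and E(L²_l | F_l) = 1 almost surely. Then E[(√(∏_{l=0}^{K} L¹_l) − √(∏_{l=0}^{K} L²_l))²] ≤ ∑_{l=0}^{K} ess sup E[(√(L¹_l) − √(L²_l))² | F_l]. -/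
/-!
Write `ρ_l = √L¹_l √L²_l`. Since `(√x - √y)² = x + y - 2√x√y`, the left side is
`E ∏ L¹_l + E ∏ L²_l - 2 E ∏ ρ_l`, and the same identity conditioned on `F_l` gives
`E[ρ_l | F_l] = 1 - E[(√L¹_l - √L²_l)² | F_l] / 2 ∈ [1 - ε_l / 2, 1]`, where `ε_l` is the
essential supremum of `E[(√L¹_l - √L²_l)² | F_l]`. Conditioning on
`F_K, …, F_0` in turn, each time pulling out the `F_l`-measurable partial product, yields
`E ∏ L^i_l = 1` and `E ∏ ρ_l ≥ ∏ (1 - ε_l / 2) ≥ 1 - ∑ ε_l / 2`. The partial products are not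
assumed integrable; their integrability comes out of the same induction by truncation.
-/

open MeasureTheory Real Filter Finset

lemma one_sub_sum_le_prod_one_sub {ι : Type*} (s : Finset ι) {x : ι → ℝ}
    (hx0 : ∀ i ∈ s, 0 ≤ x i) (hx1 : ∀ i ∈ s, x i ≤ 1) :
    1 - ∑ i ∈ s, x i ≤ ∏ i ∈ s, (1 - x i) := by
  classical
  induction s using Finset.induction_on with
  | empty => simp
  | insert j s hj ih =>
    have hs := ih (fun i hi => hx0 i (mem_insert_of_mem hi))
      fun i hi => hx1 i (mem_insert_of_mem hi)
    have hsum : 0 ≤ ∑ i ∈ s, x i := sum_nonneg fun i hi => hx0 i (mem_insert_of_mem hi)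
    rw [sum_insert hj, prod_insert hj]
    calc 1 - (x j + ∑ i ∈ s, x i) ≤ (1 - x j) * (1 - ∑ i ∈ s, x i) := by
          nlinarith [mul_nonneg (hx0 j (mem_insert_self j s)) hsum]
      _ ≤ (1 - x j) * ∏ i ∈ s, (1 - x i) :=
          mul_le_mul_of_nonneg_left hs (sub_nonneg.2 (hx1 j (mem_insert_self j s)))

lemma sq_sqrt_sub_sqrt {x y : ℝ} (hx : 0 ≤ x) (hy : 0 ≤ y) :
    (√x - √y) ^ 2 = x + y - 2 * (√x * √y) := by
  rw [sub_sq, sq_sqrt hx, sq_sqrt hy]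
  ring

lemma sq_sqrt_prod_sub_sqrt_prod {ι : Type*} (s : Finset ι) {x y : ι → ℝ}
    (hx : ∀ i ∈ s, 0 ≤ x i) (hy : ∀ i ∈ s, 0 ≤ y i) :
    (√(∏ i ∈ s, x i) - √(∏ i ∈ s, y i)) ^ 2
      = ∏ i ∈ s, x i + ∏ i ∈ s, y i - 2 * ∏ i ∈ s, (√(x i) * √(y i)) := by
  rw [sq_sqrt_sub_sqrt (prod_nonneg hx) (prod_nonneg hy), sqrt_prod s hx, sqrt_prod s hy,
    prod_mul_distrib]

lemma integrable_of_monotone_of_integral_le {α : Type*} {mα : MeasurableSpace α}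
    {μ : Measure α} {G : ℕ → α → ℝ} {f : α → ℝ} {C : ℝ} (hG : ∀ n, Integrable (G n) μ)
    (hG0 : ∀ n, 0 ≤ G n) (hmono : ∀ x, Monotone fun n => G n x)
    (hlim : ∀ x, Tendsto (fun n => G n x) atTop (nhds (f x)))
    (hC : ∀ n, ∫ x, G n x ∂μ ≤ C) :
    Integrable f μ := by
  have hf0 : 0 ≤ f := fun x => ge_of_tendsto' (hlim x) fun n => hG0 n x
  refine ⟨aestronglyMeasurable_of_tendsto_ae _ (fun n => (hG n).1) (ae_of_all _ hlim), ?_⟩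
  rw [hasFiniteIntegral_iff_ofReal (ae_of_all _ hf0)]
  have hlim' : Tendsto (fun n => ∫⁻ x, ENNReal.ofReal (G n x) ∂μ) atTop
      (nhds (∫⁻ x, ENNReal.ofReal (f x) ∂μ)) :=
    lintegral_tendsto_of_tendsto_of_monotone (fun n => (hG n).1.aemeasurable.ennreal_ofReal)
      (ae_of_all _ fun x i j hij => ENNReal.ofReal_le_ofReal (hmono x hij))
      (ae_of_all _ fun x => (ENNReal.continuous_ofReal.tendsto _).comp (hlim x))
  refine (le_of_tendsto' hlim' fun n => ?_).trans_lt (ENNReal.ofReal_lt_top (r := C))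
  rw [← ofReal_integral_eq_lintegral_ofReal (hG n) (ae_of_all _ (hG0 n))]
  exact ENNReal.ofReal_le_ofReal (hC n)

section PullOut

variable {Ω : Type*} {m mΩ : MeasurableSpace Ω} {μ : Measure Ω} {f g : Ω → ℝ}

lemma integrable_mul_condExp (hf : StronglyMeasurable[m] f) (hg : Integrable g μ)
    (hfg : Integrable (f * g) μ) : Integrable (f * μ[g|m]) μ :=
  integrable_condExp.congr (condExp_mul_of_stronglyMeasurable_left hf hfg hg)

lemma integral_mul_condExp (hm : m ≤ mΩ) [SigmaFinite (μ.trim hm)]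
    (hf : StronglyMeasurable[m] f) (hg : Integrable g μ) (hfg : Integrable (f * g) μ) :
    ∫ ω, f ω * g ω ∂μ = ∫ ω, f ω * μ[g|m] ω ∂μ := by
  rw [← integral_condExp hm]
  exact integral_congr_ae (condExp_mul_of_stronglyMeasurable_left hf hfg hg)

lemma integral_mul_le_of_condExp_le (hm : m ≤ mΩ) [SigmaFinite (μ.trim hm)] (hf0 : 0 ≤ f)
    (hf : StronglyMeasurable[m] f) (hfi : Integrable f μ) (hg : Integrable g μ)
    (hfg : Integrable (f * g) μ) {c : ℝ} (hc : μ[g|m] ≤ᵐ[μ] fun _ => c) :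
    ∫ ω, f ω * g ω ∂μ ≤ (∫ ω, f ω ∂μ) * c := by
  rw [integral_mul_condExp hm hf hg hfg, ← integral_mul_const]
  refine integral_mono_ae (integrable_mul_condExp hf hg hfg) (hfi.mul_const c) ?_
  filter_upwards [hc] with ω hω using mul_le_mul_of_nonneg_left hω (hf0 ω)

lemma le_integral_mul_of_le_condExp (hm : m ≤ mΩ) [SigmaFinite (μ.trim hm)] (hf0 : 0 ≤ f)
    (hf : StronglyMeasurable[m] f) (hfi : Integrable f μ) (hg : Integrable g μ)
    (hfg : Integrable (f * g) μ) {c : ℝ} (hc : (fun _ => c) ≤ᵐ[μ] μ[g|m]) :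
    (∫ ω, f ω ∂μ) * c ≤ ∫ ω, f ω * g ω ∂μ := by
  rw [integral_mul_condExp hm hf hg hfg, ← integral_mul_const]
  refine integral_mono_ae (hfi.mul_const c) (integrable_mul_condExp hf hg hfg) ?_
  filter_upwards [hc] with ω hω using mul_le_mul_of_nonneg_left hω (hf0 ω)

-- Truncating `f` at level `n` makes `min f n * g` integrable; monotone convergence then
-- passes the bound `∫ min f n * g ≤ |c| ∫ f` to the limit.
lemma integrable_mul_of_condExp_le (hm : m ≤ mΩ) [SigmaFinite (μ.trim hm)] (hf0 : 0 ≤ f)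
    (hf : StronglyMeasurable[m] f) (hfi : Integrable f μ) (hg0 : 0 ≤ g) (hg : Integrable g μ)
    {c : ℝ} (hc : μ[g|m] ≤ᵐ[μ] fun _ => c) :
    Integrable (f * g) μ := by
  set f' : ℕ → Ω → ℝ := fun n ω => min (f ω) n
  have hf'0 : ∀ n, 0 ≤ f' n := fun n ω => le_min (hf0 ω) n.cast_nonneg
  have hf' : ∀ n, StronglyMeasurable[m] (f' n) := fun n =>
    (continuous_id.min continuous_const).comp_stronglyMeasurable hf
  have hf'_bdd : ∀ n, ∀ᵐ ω ∂μ, ‖f' n ω‖ ≤ n := fun n => ae_of_all _ fun ω => by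
    rw [norm_of_nonneg (hf'0 n ω)]
    exact min_le_right _ _
  have hf'g : ∀ n, Integrable (f' n * g) μ := fun n =>
    hg.bdd_mul ((hf' n).mono hm).aestronglyMeasurable (hf'_bdd n)
  refine integrable_of_monotone_of_integral_le hf'g (fun n ω => mul_nonneg (hf'0 n ω) (hg0 ω))
    (fun ω i j hij => mul_le_mul_of_nonneg_right (min_le_min_left _ (Nat.cast_le.2 hij)) (hg0 ω))
    (fun ω => tendsto_atTop_of_eventually_const fun n (hn : ⌈f ω⌉₊ ≤ n) => by
      simp only [Pi.mul_apply, f', min_eq_left ((Nat.le_ceil _).trans (Nat.cast_le.2 hn))])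
    (C := ∫ ω, f ω * |c| ∂μ) fun n => ?_
  simp only [Pi.mul_apply]
  rw [integral_mul_condExp hm (hf' n) hg (hf'g n)]
  refine integral_mono_ae (integrable_mul_condExp (hf' n) hg (hf'g n)) (hfi.mul_const _) ?_
  filter_upwards [hc, condExp_nonneg (m := m) (ae_of_all μ hg0)] with ω hω hω0
  exact mul_le_mul (min_le_left _ _) (hω.trans (le_abs_self c)) hω0 (hf0 ω)

end PullOut

section AdaptedProduct

variable {Ω : Type*} {F : ℕ → MeasurableSpace Ω} {X : ℕ → Ω → ℝ} {n : ℕ}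

lemma stronglyMeasurable_prod_range (hF : ∀ l < n, F l ≤ F (l + 1))
    (hX : ∀ l < n, StronglyMeasurable[F (l + 1)] (X l)) :
    StronglyMeasurable[F n] fun ω => ∏ l ∈ range n, X l ω := by
  induction n with
  | zero => simpa using stronglyMeasurable_const
  | succ k ih =>
    simp_rw [prod_range_succ]
    exact ((ih (fun l hl => hF l (by omega)) fun l hl => hX l (by omega)).mono
      (hF k (by omega))).mul (hX k (by omega))

variable {mΩ : MeasurableSpace Ω} {P : Measure Ω} [IsProbabilityMeasure P] {a b : ℕ → ℝ}

lemma integrable_prod_range_and_integral_mem_Icc (hF : ∀ l < n, F l ≤ F (l + 1))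
    (hFm : ∀ l < n, F l ≤ mΩ) (hX0 : ∀ l < n, 0 ≤ X l)
    (hX : ∀ l < n, StronglyMeasurable[F (l + 1)] (X l)) (hXi : ∀ l < n, Integrable (X l) P)
    (ha : ∀ l < n, 0 ≤ a l) (hXa : ∀ l < n, (fun _ => a l) ≤ᵐ[P] P[X l|F l])
    (hXb : ∀ l < n, P[X l|F l] ≤ᵐ[P] fun _ => b l) :
    Integrable (fun ω => ∏ l ∈ range n, X l ω) P ∧
      ∫ ω, ∏ l ∈ range n, X l ω ∂P ∈ Set.Icc (∏ l ∈ range n, a l) (∏ l ∈ range n, b l) := by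
  suffices ∀ k ≤ n, Integrable (fun ω => ∏ l ∈ range k, X l ω) P ∧
      ∫ ω, ∏ l ∈ range k, X l ω ∂P ∈ Set.Icc (∏ l ∈ range k, a l) (∏ l ∈ range k, b l) from
    this n le_rfl
  intro k hk
  induction k with
  | zero => simp
  | succ k ih =>
    have hkn : k < n := by omega
    obtain ⟨hint, hlow, hup⟩ := ih hkn.le
    have hprod0 : 0 ≤ fun ω => ∏ l ∈ range k, X l ω := fun ω =>
      prod_nonneg fun l hl => hX0 l ((mem_range.1 hl).trans hkn) ω
    have hprod := stronglyMeasurable_prod_range (n := k) (fun l hl => hF l (by omega))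
      fun l hl => hX l (by omega)
    have hbk : 0 ≤ b k := by
      obtain ⟨ω, h1, h2⟩ := ((hXa k hkn).and (hXb k hkn)).exists
      exact (ha k hkn).trans (h1.trans h2)
    have hmul := integrable_mul_of_condExp_le (hFm k hkn) hprod0 hprod hint (hX0 k hkn)
      (hXi k hkn) (hXb k hkn)
    simp only [prod_range_succ]
    refine ⟨hmul, ?_, ?_⟩
    · calc (∏ l ∈ range k, a l) * a k ≤ (∫ ω, ∏ l ∈ range k, X l ω ∂P) * a k :=
            mul_le_mul_of_nonneg_right hlow (ha k hkn)
        _ ≤ _ := le_integral_mul_of_le_condExp (hFm k hkn) hprod0 hprod hint (hXi k hkn) hmul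
            (hXa k hkn)
    · calc _ ≤ (∫ ω, ∏ l ∈ range k, X l ω ∂P) * b k :=
            integral_mul_le_of_condExp_le (hFm k hkn) hprod0 hprod hint (hXi k hkn) hmul
              (hXb k hkn)
        _ ≤ (∏ l ∈ range k, b l) * b k := mul_le_mul_of_nonneg_right hup hbk

end AdaptedProduct

lemma essSup_mem_Icc_of_ae_mem_Icc {α : Type*} {mα : MeasurableSpace α} {μ : Measure α}
    [NeZero μ] {f : α → ℝ} {a b : ℝ} (hf : ∀ᵐ x ∂μ, f x ∈ Set.Icc a b) :
    essSup f μ ∈ Set.Icc a b := by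
  have hfa : ∀ᵐ x ∂μ, a ≤ f x := hf.mono fun x hx => hx.1
  have hfb : f ≤ᵐ[μ] fun _ => b := hf.mono fun x hx => hx.2
  obtain ⟨x, hxa, hxb⟩ := (hfa.and (ae_le_essSup ⟨b, hfb⟩)).exists
  exact ⟨hxa.trans hxb, essSup_le_of_ae_le b hfb (isCoboundedUnder_le_of_eventually_le _ hfa)⟩

section Hellinger

variable {Ω : Type*} {m mΩ : MeasurableSpace Ω} {μ : Measure Ω} {L M : Ω → ℝ}

lemma integrable_sqrt_mul_sqrt (hL0 : 0 ≤ L) (hM0 : 0 ≤ M) (hL : Integrable L μ)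
    (hM : Integrable M μ) : Integrable (fun ω => √(L ω) * √(M ω)) μ := by
  refine ((hL.add hM).div_const 2).mono'
    ((continuous_sqrt.comp_aestronglyMeasurable hL.1).mul
      (continuous_sqrt.comp_aestronglyMeasurable hM.1)) (ae_of_all _ fun ω => ?_)
  rw [norm_of_nonneg (by positivity), Pi.add_apply]
  nlinarith [sq_nonneg (√(L ω) - √(M ω)), sq_sqrt_sub_sqrt (hL0 ω) (hM0 ω)]

lemma condExp_sq_sqrt_sub_sqrt (hL0 : 0 ≤ L) (hM0 : 0 ≤ M) (hL : Integrable L μ)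
    (hM : Integrable M μ) (hLm : μ[L|m] =ᵐ[μ] fun _ => (1 : ℝ))
    (hMm : μ[M|m] =ᵐ[μ] fun _ => (1 : ℝ)) :
    μ[fun ω => (√(L ω) - √(M ω)) ^ 2|m]
      =ᵐ[μ] fun ω => 2 - 2 * μ[fun ω => √(L ω) * √(M ω)|m] ω := by
  have hρ := integrable_sqrt_mul_sqrt hL0 hM0 hL hM
  have hsq : (fun ω => (√(L ω) - √(M ω)) ^ 2) = L + M - (2 : ℝ) • fun ω => √(L ω) * √(M ω) :=
    funext fun ω => sq_sqrt_sub_sqrt (hL0 ω) (hM0 ω)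
  rw [hsq]
  filter_upwards [condExp_sub (hL.add hM) (hρ.smul (2 : ℝ)) m, condExp_add hL hM m,
    condExp_smul (2 : ℝ) (fun ω => √(L ω) * √(M ω)) m, hLm, hMm] with ω h1 h2 h3 h4 h5
  simp only [h1, Pi.sub_apply, h2, Pi.add_apply, h4, h5, h3, Pi.smul_apply, smul_eq_mul]
  norm_num

lemma condExp_sqrt_mul_sqrt_le_one (hL0 : 0 ≤ L) (hM0 : 0 ≤ M) (hL : Integrable L μ)
    (hM : Integrable M μ) (hLm : μ[L|m] =ᵐ[μ] fun _ => (1 : ℝ))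
    (hMm : μ[M|m] =ᵐ[μ] fun _ => (1 : ℝ)) :
    μ[fun ω => √(L ω) * √(M ω)|m] ≤ᵐ[μ] fun _ => 1 := by
  filter_upwards [condExp_sq_sqrt_sub_sqrt hL0 hM0 hL hM hLm hMm,
    condExp_nonneg (m := m) (ae_of_all μ fun ω => sq_nonneg (√(L ω) - √(M ω)))] with ω h h0
  simp only [Pi.zero_apply, h] at h0
  linarith

lemma condExp_sq_sqrt_sub_sqrt_mem_Icc (hL0 : 0 ≤ L) (hM0 : 0 ≤ M) (hL : Integrable L μ)
    (hM : Integrable M μ) (hLm : μ[L|m] =ᵐ[μ] fun _ => (1 : ℝ))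
    (hMm : μ[M|m] =ᵐ[μ] fun _ => (1 : ℝ)) :
    ∀ᵐ ω ∂μ, μ[fun ω => (√(L ω) - √(M ω)) ^ 2|m] ω ∈ Set.Icc 0 2 := by
  filter_upwards [condExp_sq_sqrt_sub_sqrt hL0 hM0 hL hM hLm hMm,
    condExp_nonneg (m := m) (ae_of_all μ fun ω => sq_nonneg (√(L ω) - √(M ω))),
    condExp_nonneg (m := m)
      (ae_of_all μ fun ω => mul_nonneg (sqrt_nonneg (L ω)) (sqrt_nonneg (M ω)))]
    with ω h h0 hρ0
  simp only [Pi.zero_apply] at h0 hρ0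
  exact ⟨h0, by linarith⟩

lemma one_sub_half_essSup_le_condExp_sqrt_mul_sqrt (hL0 : 0 ≤ L) (hM0 : 0 ≤ M)
    (hL : Integrable L μ) (hM : Integrable M μ) (hLm : μ[L|m] =ᵐ[μ] fun _ => (1 : ℝ))
    (hMm : μ[M|m] =ᵐ[μ] fun _ => (1 : ℝ)) :
    (fun _ => 1 - essSup (μ[fun ω => (√(L ω) - √(M ω)) ^ 2|m]) μ / 2)
      ≤ᵐ[μ] μ[fun ω => √(L ω) * √(M ω)|m] := by
  have hIcc := condExp_sq_sqrt_sub_sqrt_mem_Icc hL0 hM0 hL hM hLm hMm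
  filter_upwards [condExp_sq_sqrt_sub_sqrt hL0 hM0 hL hM hLm hMm,
    ae_le_essSup (isBoundedUnder_of_eventually_le (hIcc.mono fun ω hω => hω.2))] with ω h hε
  rw [h] at hε
  linarith

end Hellinger

section LikelihoodRatioProduct

variable {Ω : Type*} {mΩ : MeasurableSpace Ω} {P : Measure Ω} [IsProbabilityMeasure P]
  {F : ℕ → MeasurableSpace Ω} {n : ℕ}

lemma integrable_prod_range_and_integral_eq_one {X : ℕ → Ω → ℝ}
    (hF : ∀ l < n, F l ≤ F (l + 1)) (hFm : ∀ l < n, F l ≤ mΩ) (hX0 : ∀ l < n, 0 ≤ X l)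
    (hX : ∀ l < n, StronglyMeasurable[F (l + 1)] (X l)) (hXi : ∀ l < n, Integrable (X l) P)
    (hXc : ∀ l < n, P[X l|F l] =ᵐ[P] fun _ => (1 : ℝ)) :
    Integrable (fun ω => ∏ l ∈ range n, X l ω) P ∧ ∫ ω, ∏ l ∈ range n, X l ω ∂P = 1 := by
  obtain ⟨hint, hmean⟩ := integrable_prod_range_and_integral_mem_Icc (a := fun _ => 1)
    (b := fun _ => 1) hF hFm hX0 hX hXi (fun _ _ => zero_le_one)
    (fun l hl => (hXc l hl).symm.le) fun l hl => (hXc l hl).le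
  simpa only [prod_const_one, Set.Icc_self, Set.mem_singleton_iff] using And.intro hint hmean

lemma integrable_and_one_sub_half_sum_le_integral_prod_sqrt_mul_sqrt {L M : ℕ → Ω → ℝ}
    (hF : ∀ l < n, F l ≤ F (l + 1)) (hFm : ∀ l < n, F l ≤ mΩ)
    (hL0 : ∀ l < n, 0 ≤ L l) (hM0 : ∀ l < n, 0 ≤ M l)
    (hL : ∀ l < n, Integrable (L l) P) (hM : ∀ l < n, Integrable (M l) P)
    (hLs : ∀ l < n, StronglyMeasurable[F (l + 1)] (L l))
    (hMs : ∀ l < n, StronglyMeasurable[F (l + 1)] (M l))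
    (hLc : ∀ l < n, P[L l|F l] =ᵐ[P] fun _ => (1 : ℝ))
    (hMc : ∀ l < n, P[M l|F l] =ᵐ[P] fun _ => (1 : ℝ)) :
    Integrable (fun ω => ∏ l ∈ range n, (√(L l ω) * √(M l ω))) P ∧
      1 - (∑ l ∈ range n, essSup (P[fun ω => (√(L l ω) - √(M l ω)) ^ 2|F l]) P) / 2
        ≤ ∫ ω, ∏ l ∈ range n, (√(L l ω) * √(M l ω)) ∂P := by
  set ε : ℕ → ℝ := fun l => essSup (P[fun ω => (√(L l ω) - √(M l ω)) ^ 2|F l]) P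
  have hε : ∀ l < n, ε l ∈ Set.Icc 0 2 := fun l hl => essSup_mem_Icc_of_ae_mem_Icc
    (condExp_sq_sqrt_sub_sqrt_mem_Icc (hL0 l hl) (hM0 l hl) (hL l hl) (hM l hl) (hLc l hl)
      (hMc l hl))
  obtain ⟨hint, hmean, -⟩ := integrable_prod_range_and_integral_mem_Icc
    (X := fun l ω => √(L l ω) * √(M l ω)) (a := fun l => 1 - ε l / 2) (b := fun _ => 1)
    hF hFm (fun l _ ω => by positivity)
    (fun l hl => (continuous_sqrt.comp_stronglyMeasurable (hLs l hl)).mul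
      (continuous_sqrt.comp_stronglyMeasurable (hMs l hl)))
    (fun l hl => integrable_sqrt_mul_sqrt (hL0 l hl) (hM0 l hl) (hL l hl) (hM l hl))
    (fun l hl => by linarith [(hε l hl).2])
    (fun l hl => one_sub_half_essSup_le_condExp_sqrt_mul_sqrt (hL0 l hl) (hM0 l hl) (hL l hl)
      (hM l hl) (hLc l hl) (hMc l hl))
    fun l hl => condExp_sqrt_mul_sqrt_le_one (hL0 l hl) (hM0 l hl) (hL l hl) (hM l hl)
      (hLc l hl) (hMc l hl)
  refine ⟨hint, ?_⟩
  rw [sum_div]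
  exact (one_sub_sum_le_prod_one_sub (range n) (x := fun l => ε l / 2)
    (fun l hl => by linarith [(hε l (mem_range.1 hl)).1])
    fun l hl => by linarith [(hε l (mem_range.1 hl)).2]).trans hmean

end LikelihoodRatioProduct

/-- Hellinger-distance bound for products of conditional likelihood ratios
(Lemma 3.1 of Grama–Neumann). -/
theorem hellinger_product_bound
    {Ω : Type*} [mΩ : MeasurableSpace Ω] (P : Measure Ω) [IsProbabilityMeasure P]
    (K : ℕ) (F : ℕ → MeasurableSpace Ω)
    (hF_mono : ∀ l, l ≤ K → F l ≤ F (l + 1))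
    (hF_le : ∀ l, l ≤ K + 1 → F l ≤ mΩ)
    (L1 L2 : ℕ → Ω → ℝ)
    (hL1_nonneg : ∀ l, l ≤ K → ∀ ω, 0 ≤ L1 l ω)
    (hL2_nonneg : ∀ l, l ≤ K → ∀ ω, 0 ≤ L2 l ω)
    (hL1_int : ∀ l, l ≤ K → Integrable (L1 l) P)
    (hL2_int : ∀ l, l ≤ K → Integrable (L2 l) P)
    (hL1_meas : ∀ l, l ≤ K → StronglyMeasurable[F (l + 1)] (L1 l))
    (hL2_meas : ∀ l, l ≤ K → StronglyMeasurable[F (l + 1)] (L2 l))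
    (hL1_ce : ∀ l, l ≤ K → P[L1 l | F l] =ᵐ[P] fun _ => (1 : ℝ))
    (hL2_ce : ∀ l, l ≤ K → P[L2 l | F l] =ᵐ[P] fun _ => (1 : ℝ)) :
    ∫ ω, (Real.sqrt (∏ l ∈ Finset.range (K + 1), L1 l ω)
          - Real.sqrt (∏ l ∈ Finset.range (K + 1), L2 l ω)) ^ 2 ∂P
      ≤ ∑ l ∈ Finset.range (K + 1),
          essSup (P[fun ω => (Real.sqrt (L1 l ω) - Real.sqrt (L2 l ω)) ^ 2 | F l]) P := by
  simp only [← Nat.lt_add_one_iff] at hF_mono hL1_nonneg hL2_nonneg hL1_int hL2_int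
  simp only [← Nat.lt_add_one_iff] at hL1_meas hL2_meas hL1_ce hL2_ce
  have hFm : ∀ l < K + 1, F l ≤ mΩ := fun l hl => hF_le l hl.le
  obtain ⟨hA, hA_mean⟩ := integrable_prod_range_and_integral_eq_one hF_mono hFm hL1_nonneg
    hL1_meas hL1_int hL1_ce
  obtain ⟨hB, hB_mean⟩ := integrable_prod_range_and_integral_eq_one hF_mono hFm hL2_nonneg
    hL2_meas hL2_int hL2_ce
  obtain ⟨hS, hS_mean⟩ := integrable_and_one_sub_half_sum_le_integral_prod_sqrt_mul_sqrt hF_mono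
    hFm hL1_nonneg hL2_nonneg hL1_int hL2_int hL1_meas hL2_meas hL1_ce hL2_ce
  calc ∫ ω, (√(∏ l ∈ range (K + 1), L1 l ω) - √(∏ l ∈ range (K + 1), L2 l ω)) ^ 2 ∂P
      = ∫ ω, (∏ l ∈ range (K + 1), L1 l ω + ∏ l ∈ range (K + 1), L2 l ω
          - 2 * ∏ l ∈ range (K + 1), (√(L1 l ω) * √(L2 l ω))) ∂P :=
        integral_congr_ae (ae_of_all _ fun ω => sq_sqrt_prod_sub_sqrt_prod _
          (fun l hl => hL1_nonneg l (mem_range.1 hl) ω) fun l hl => hL2_nonneg l (mem_range.1 hl) ω)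
    _ = 2 - 2 * ∫ ω, ∏ l ∈ range (K + 1), (√(L1 l ω) * √(L2 l ω)) ∂P := by
        rw [integral_sub (hA.fun_add hB) (hS.const_mul 2), integral_add hA hB, integral_const_mul,
          hA_mean, hB_mean]
        norm_num
    _ ≤ _ := by linarith
end

section
/- Fix reals A < B and let g: ℝ → ℝ be continuously differentiable with bounded derivative. Then for every integer j* ≥ 0 and every x ∈ (A, B], | g(x) − ( c_0(g) h_0(x) + ∑_{j=0}^{j*} ∑_{k=1}^{2^j} c_{j,k}(g) h_{j,k}(x) ) | ≤ (B − A) 2^{−j* − 2} ‖g'‖_∞, where ‖g'‖_∞ = sup_x |g'(x)|. -/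
open MeasureTheory Real

/-- The dyadic grid points `s_{j,k} = A + k 2^{-j} (B - A)` on `[A, B]`. -/
noncomputable def haarPt (A B : ℝ) (j k : ℕ) : ℝ := A + k * (B - A) / 2 ^ j

/-- The dyadic subinterval `I_{j,k} = (s_{j,k-1}, s_{j,k}]` of `[A, B]`. -/
noncomputable def haarI (A B : ℝ) (j k : ℕ) : Set ℝ :=
  Set.Ioc (haarPt A B j (k - 1)) (haarPt A B j k)

/-- The coarsest Haar basis function `h_0 = (B - A)^{-1/2} 1_{I_{0,1}}`. -/
noncomputable def haarH0 (A B : ℝ) (x : ℝ) : ℝ :=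
  (Real.sqrt (B - A))⁻¹ * (haarI A B 0 1).indicator 1 x

/-- The Haar basis function
`h_{j,k} = (B - A)^{-1/2} 2^{j/2} (1_{I_{j+1,2k-1}} - 1_{I_{j+1,2k}})`. -/
noncomputable def haarH (A B : ℝ) (j k : ℕ) (x : ℝ) : ℝ :=
  (Real.sqrt (B - A))⁻¹ * Real.sqrt (2 ^ j) *
    ((haarI A B (j + 1) (2 * k - 1)).indicator 1 x - (haarI A B (j + 1) (2 * k)).indicator 1 x)

/-- The zeroth Haar coefficient `c_0(g) = ∫_A^B g(t) h_0(t) dt`. -/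
noncomputable def haarC0 (A B : ℝ) (g : ℝ → ℝ) : ℝ := ∫ t in A..B, g t * haarH0 A B t

/-- The Haar coefficient `c_{j,k}(g) = ∫_A^B g(t) h_{j,k}(t) dt`. -/
noncomputable def haarC (A B : ℝ) (j k : ℕ) (g : ℝ → ℝ) : ℝ :=
  ∫ t in A..B, g t * haarH A B j k t

/-!
At a point `x ∈ I_{n,K}`, the Haar partial sum over the levels `j < n` is the mean of `g` over
`I_{n,K}`: adding level `n` replaces the mean over a dyadic interval by the mean over the half
containing `x`, because `c_{n,k} h_{n,k}(x) = ±(m_left - m_right) / 2`. A function with Lipschitz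
constant `L` stays within `L ℓ / 2` of its mean over an interval of length `ℓ`, since
`∫ |x - t| dt ≤ ℓ² / 2` there; take `ℓ = (B - A) 2^{-j*-1}` and `L = ‖g'‖_∞`.
-/

open Set

lemma integral_abs_sub_le {a b x : ℝ} (hx : x ∈ Icc a b) :
    ∫ t in a..b, |x - t| ≤ (b - a) ^ 2 / 2 := by
  have hcont : Continuous fun t : ℝ => |x - t| := by fun_prop
  have hleft : ∫ t in a..x, |x - t| = (x - a) ^ 2 / 2 := by
    rw [intervalIntegral.integral_congr (g := fun t => x - t) fun t ht =>
      abs_of_nonneg (sub_nonneg.mpr (uIcc_of_le hx.1 ▸ ht).2),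
      intervalIntegral.integral_comp_sub_left (fun t => t)]
    simp
  have hright : ∫ t in x..b, |x - t| = (b - x) ^ 2 / 2 := by
    rw [intervalIntegral.integral_congr (g := fun t => t - x) fun t ht =>
      abs_sub_comm x t ▸ abs_of_nonneg (sub_nonneg.mpr (uIcc_of_le hx.2 ▸ ht).1),
      intervalIntegral.integral_comp_sub_right (fun t => t)]
    simp
  rw [← intervalIntegral.integral_add_adjacent_intervals (hcont.intervalIntegrable a x)
    (hcont.intervalIntegrable x b), hleft, hright]
  nlinarith [mul_nonneg (sub_nonneg.mpr hx.1) (sub_nonneg.mpr hx.2)]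

lemma abs_sub_interval_mean_le {g : ℝ → ℝ} {L : NNReal} {a b x : ℝ} (hab : a < b)
    (hg : LipschitzOnWith L g (Icc a b)) (hx : x ∈ Icc a b) :
    |g x - (b - a)⁻¹ * ∫ t in a..b, g t| ≤ L * (b - a) / 2 := by
  have hba : 0 < b - a := sub_pos.mpr hab
  have hgi : IntervalIntegrable g volume a b := hg.continuousOn.intervalIntegrable_of_Icc hab.le
  have hrepr : g x - (b - a)⁻¹ * ∫ t in a..b, g t = (b - a)⁻¹ * ∫ t in a..b, (g x - g t) := by
    rw [intervalIntegral.integral_sub intervalIntegrable_const hgi, intervalIntegral.integral_const,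
      smul_eq_mul]
    field_simp
  have hcont : Continuous fun t : ℝ => (L : ℝ) * |x - t| := by fun_prop
  have hbound : |∫ t in a..b, (g x - g t)| ≤ L * ((b - a) ^ 2 / 2) :=
    calc |∫ t in a..b, (g x - g t)|
        ≤ ∫ t in a..b, (L : ℝ) * |x - t| := by
          refine intervalIntegral.norm_integral_le_of_norm_le (f := fun t => g x - g t) hab.le
            (Filter.Eventually.of_forall fun t ht => ?_) (hcont.intervalIntegrable a b)
          simpa only [Real.norm_eq_abs, Real.dist_eq] using
            hg.dist_le_mul x hx t (Ioc_subset_Icc_self ht)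
      _ ≤ L * ((b - a) ^ 2 / 2) := by
          rw [intervalIntegral.integral_const_mul]
          gcongr
          exact integral_abs_sub_le hx
  rw [hrepr, abs_mul, abs_inv, abs_of_pos hba]
  calc (b - a)⁻¹ * |∫ t in a..b, (g x - g t)| ≤ (b - a)⁻¹ * (L * ((b - a) ^ 2 / 2)) := by gcongr
    _ = L * (b - a) / 2 := by field_simp

section

variable {A B : ℝ} {g : ℝ → ℝ}

lemma haarPt_mono (hAB : A ≤ B) (j : ℕ) : Monotone (haarPt A B j) := fun k k' hk => by
  unfold haarPt
  gcongr

lemma haarPt_zero (j : ℕ) : haarPt A B j 0 = A := by simp [haarPt]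

lemma haarPt_two_pow (j : ℕ) : haarPt A B j (2 ^ j) = B := by simp [haarPt]

lemma haarPt_succ_two_mul (j k : ℕ) : haarPt A B (j + 1) (2 * k) = haarPt A B j k := by
  simp only [haarPt]
  push_cast
  ring

lemma haarPt_sub_haarPt_pred (j : ℕ) {k : ℕ} (hk : 1 ≤ k) :
    haarPt A B j k - haarPt A B j (k - 1) = (B - A) / 2 ^ j := by
  simp only [haarPt, Nat.cast_sub hk]
  ring

lemma haarPt_mem_Icc (hAB : A ≤ B) {j k : ℕ} (hk : k ≤ 2 ^ j) : haarPt A B j k ∈ Icc A B := by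
  constructor
  · simpa [haarPt_zero] using haarPt_mono hAB j (Nat.zero_le k)
  · simpa [haarPt_two_pow] using haarPt_mono hAB j hk

lemma haarI_zero_one : haarI A B 0 1 = Ioc A B := by
  simp [haarI, haarPt]

lemma haarI_subset_Ioc (hAB : A ≤ B) {j k : ℕ} (hk : k ≤ 2 ^ j) : haarI A B j k ⊆ Ioc A B :=
  Ioc_subset_Ioc (haarPt_mem_Icc hAB (by omega)).1 (haarPt_mem_Icc hAB hk).2

lemma haarI_eq_union (hAB : A ≤ B) (j : ℕ) {k : ℕ} (hk : 1 ≤ k) :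
    haarI A B j k = haarI A B (j + 1) (2 * k - 1) ∪ haarI A B (j + 1) (2 * k) := by
  have hpred : 2 * k - 1 - 1 = 2 * (k - 1) := by omega
  simp only [haarI, hpred, haarPt_succ_two_mul]
  rw [Ioc_union_Ioc_eq_Ioc]
  · simpa only [haarPt_succ_two_mul] using
      haarPt_mono hAB (j + 1) (by omega : 2 * (k - 1) ≤ 2 * k - 1)
  · simpa only [haarPt_succ_two_mul] using
      haarPt_mono hAB (j + 1) (by omega : 2 * k - 1 ≤ 2 * k)

lemma eq_of_mem_haarI (hAB : A ≤ B) {j k k' : ℕ} {x : ℝ} (hx : x ∈ haarI A B j k)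
    (hx' : x ∈ haarI A B j k') : k = k' := by
  have key : ∀ {m n : ℕ}, x ∈ haarI A B j m → x ∈ haarI A B j n → ¬ m < n := by
    intro m n hm hn hlt
    have := haarPt_mono hAB j (by omega : m ≤ n - 1)
    linarith [hm.2, hn.1]
  exact le_antisymm (not_lt.mp (key hx' hx)) (not_lt.mp (key hx hx'))

lemma exists_mem_haarI (hAB : A ≤ B) {x : ℝ} (hx : x ∈ Ioc A B) (j : ℕ) :
    ∃ k ∈ Finset.Icc 1 (2 ^ j), x ∈ haarI A B j k := by
  induction j with
  | zero => exact ⟨1, by simp, by rwa [haarI_zero_one]⟩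
  | succ n ih =>
    obtain ⟨k, hk, hxk⟩ := ih
    rw [Finset.mem_Icc] at hk
    rw [haarI_eq_union hAB n hk.1] at hxk
    rcases hxk with hl | hr
    · exact ⟨2 * k - 1, Finset.mem_Icc.mpr ⟨by omega, by rw [pow_succ]; omega⟩, hl⟩
    · exact ⟨2 * k, Finset.mem_Icc.mpr ⟨by omega, by rw [pow_succ]; omega⟩, hr⟩

lemma haarH_of_mem_left (hAB : A ≤ B) {j k : ℕ} {x : ℝ} (hk : 1 ≤ k)
    (hx : x ∈ haarI A B (j + 1) (2 * k - 1)) :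
    haarH A B j k x = (√(B - A))⁻¹ * √(2 ^ j) := by
  have hx' : x ∉ haarI A B (j + 1) (2 * k) := fun h => by
    have := eq_of_mem_haarI hAB hx h
    omega
  simp [haarH, hx, hx']

lemma haarH_of_mem_right (hAB : A ≤ B) {j k : ℕ} {x : ℝ} (hk : 1 ≤ k)
    (hx : x ∈ haarI A B (j + 1) (2 * k)) :
    haarH A B j k x = -((√(B - A))⁻¹ * √(2 ^ j)) := by
  have hx' : x ∉ haarI A B (j + 1) (2 * k - 1) := fun h => by
    have := eq_of_mem_haarI hAB hx h
    omega
  simp [haarH, hx, hx']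

lemma haarH_eq_zero (hAB : A ≤ B) {j k K : ℕ} {x : ℝ} (hx : x ∈ haarI A B j K) (hk : 1 ≤ k)
    (hkK : k ≠ K) : haarH A B j k x = 0 := by
  have hx' : x ∉ haarI A B j k := fun h => hkK (eq_of_mem_haarI hAB h hx)
  rw [haarI_eq_union hAB j hk, mem_union, not_or] at hx'
  simp [haarH, hx'.1, hx'.2]

lemma integral_mul_indicator_haarI (hAB : A ≤ B) (g : ℝ → ℝ) {j k : ℕ} (hk : k ≤ 2 ^ j) :
    ∫ t in A..B, g t * (haarI A B j k).indicator 1 t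
      = ∫ t in haarPt A B j (k - 1)..haarPt A B j k, g t := by
  simp_rw [← indicator_mul_right, Pi.one_apply, mul_one]
  rw [intervalIntegral.integral_of_le hAB,
    setIntegral_indicator (t := haarI A B j k) measurableSet_Ioc,
    inter_eq_self_of_subset_right (haarI_subset_Ioc hAB hk),
    intervalIntegral.integral_of_le (haarPt_mono hAB j (Nat.sub_le k 1))]
  rfl

/-- The mean of `g` over `I_{j,k}`, an interval of length `(B - A) / 2 ^ j`. -/
noncomputable def haarMean (A B : ℝ) (j k : ℕ) (g : ℝ → ℝ) : ℝ :=
  2 ^ j / (B - A) * ∫ t in haarPt A B j (k - 1)..haarPt A B j k, g t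

noncomputable def haarPartialSum (A B : ℝ) (g : ℝ → ℝ) (n : ℕ) (x : ℝ) : ℝ :=
  haarC0 A B g * haarH0 A B x +
    ∑ j ∈ Finset.range n, ∑ k ∈ Finset.Icc 1 (2 ^ j), haarC A B j k g * haarH A B j k x

lemma intervalIntegrable_haarPt (hAB : A ≤ B) (hg : IntervalIntegrable g volume A B)
    {j k k' : ℕ} (hk : k ≤ 2 ^ j) (hk' : k' ≤ 2 ^ j) :
    IntervalIntegrable g volume (haarPt A B j k) (haarPt A B j k') := by
  refine hg.mono_set (uIcc_subset_uIcc ?_ ?_) <;>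
    exact Icc_subset_uIcc (haarPt_mem_Icc hAB ‹_›)

lemma haarMean_eq_add_div_two (hAB : A ≤ B) (hg : IntervalIntegrable g volume A B)
    {j k : ℕ} (hk : k ∈ Finset.Icc 1 (2 ^ j)) :
    haarMean A B j k g =
      (haarMean A B (j + 1) (2 * k - 1) g + haarMean A B (j + 1) (2 * k) g) / 2 := by
  rw [Finset.mem_Icc] at hk
  have hpred : 2 * k - 1 - 1 = 2 * (k - 1) := by omega
  have hk' : 2 * k ≤ 2 ^ (j + 1) := by rw [pow_succ]; omega
  simp only [haarMean, hpred]
  rw [← haarPt_succ_two_mul j k, ← haarPt_succ_two_mul j (k - 1),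
    ← intervalIntegral.integral_add_adjacent_intervals
      (intervalIntegrable_haarPt hAB hg (by omega) (by omega : 2 * k - 1 ≤ 2 ^ (j + 1)))
      (intervalIntegrable_haarPt hAB hg (by omega) hk')]
  ring

lemma haarC0_mul_haarH0 (hAB : A ≤ B) (g : ℝ → ℝ) {x : ℝ} (hx : x ∈ Ioc A B) :
    haarC0 A B g * haarH0 A B x = haarMean A B 0 1 g := by
  have hC : haarC0 A B g = (√(B - A))⁻¹ * ∫ t in A..B, g t * (haarI A B 0 1).indicator 1 t := by
    rw [haarC0, ← intervalIntegral.integral_const_mul]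
    simp only [haarH0, mul_left_comm]
  have hsq : (√(B - A))⁻¹ * (√(B - A))⁻¹ = (B - A)⁻¹ := by
    rw [← mul_inv, Real.mul_self_sqrt (sub_nonneg.mpr hAB)]
  rw [hC, integral_mul_indicator_haarI hAB g (by norm_num), haarH0, haarI_zero_one,
    indicator_of_mem hx, Pi.one_apply, haarMean]
  linear_combination (∫ t in haarPt A B 0 (1 - 1)..haarPt A B 0 1, g t) * hsq

lemma haarC_eq (hAB : A ≤ B) (hg : IntervalIntegrable g volume A B) {j k : ℕ}
    (hk : k ≤ 2 ^ j) :
    haarC A B j k g = (√(B - A))⁻¹ * √(2 ^ j) *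
      ((∫ t in haarPt A B (j + 1) (2 * k - 1 - 1)..haarPt A B (j + 1) (2 * k - 1), g t) -
        ∫ t in haarPt A B (j + 1) (2 * k - 1)..haarPt A B (j + 1) (2 * k), g t) := by
  have hk' : 2 * k ≤ 2 ^ (j + 1) := by rw [pow_succ]; omega
  have hint : ∀ i, IntervalIntegrable (fun t => g t * (haarI A B (j + 1) i).indicator 1 t)
      volume A B := fun i => by
    simp_rw [← indicator_mul_right, Pi.one_apply, mul_one]
    exact ⟨hg.1.indicator measurableSet_Ioc, hg.2.indicator measurableSet_Ioc⟩
  rw [← integral_mul_indicator_haarI hAB g (by omega : 2 * k - 1 ≤ 2 ^ (j + 1)),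
    ← integral_mul_indicator_haarI hAB g hk', ← intervalIntegral.integral_sub (hint _) (hint _),
    ← intervalIntegral.integral_const_mul, haarC]
  simp only [haarH]
  congr 1 with t
  ring

lemma haar_normalization_sq (hAB : A ≤ B) (j : ℕ) :
    (√(B - A))⁻¹ * √(2 ^ j) * ((√(B - A))⁻¹ * √(2 ^ j)) = 2 ^ j / (B - A) := by
  rw [mul_mul_mul_comm, ← mul_inv, Real.mul_self_sqrt (sub_nonneg.mpr hAB),
    Real.mul_self_sqrt (by positivity), inv_mul_eq_div]

lemma haarC_mul_haarH_of_mem_left (hAB : A ≤ B) (hg : IntervalIntegrable g volume A B)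
    {j k : ℕ} (hk : k ∈ Finset.Icc 1 (2 ^ j)) {x : ℝ} (hx : x ∈ haarI A B (j + 1) (2 * k - 1)) :
    haarC A B j k g * haarH A B j k x =
      (haarMean A B (j + 1) (2 * k - 1) g - haarMean A B (j + 1) (2 * k) g) / 2 := by
  rw [Finset.mem_Icc] at hk
  rw [haarC_eq hAB hg hk.2, haarH_of_mem_left hAB hk.1 hx, haarMean, haarMean]
  linear_combination
    ((∫ t in haarPt A B (j + 1) (2 * k - 1 - 1)..haarPt A B (j + 1) (2 * k - 1), g t) -
      ∫ t in haarPt A B (j + 1) (2 * k - 1)..haarPt A B (j + 1) (2 * k), g t) *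
      haar_normalization_sq hAB j

lemma haarC_mul_haarH_of_mem_right (hAB : A ≤ B) (hg : IntervalIntegrable g volume A B)
    {j k : ℕ} (hk : k ∈ Finset.Icc 1 (2 ^ j)) {x : ℝ} (hx : x ∈ haarI A B (j + 1) (2 * k)) :
    haarC A B j k g * haarH A B j k x =
      (haarMean A B (j + 1) (2 * k) g - haarMean A B (j + 1) (2 * k - 1) g) / 2 := by
  rw [Finset.mem_Icc] at hk
  rw [haarC_eq hAB hg hk.2, haarH_of_mem_right hAB hk.1 hx, haarMean, haarMean]
  linear_combination
    ((∫ t in haarPt A B (j + 1) (2 * k - 1)..haarPt A B (j + 1) (2 * k), g t) -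
      ∫ t in haarPt A B (j + 1) (2 * k - 1 - 1)..haarPt A B (j + 1) (2 * k - 1), g t) *
      haar_normalization_sq hAB j

lemma sum_haarC_mul_haarH_of_mem (hAB : A ≤ B) (g : ℝ → ℝ) {j K : ℕ}
    (hK : K ∈ Finset.Icc 1 (2 ^ j)) {x : ℝ} (hx : x ∈ haarI A B j K) :
    ∑ k ∈ Finset.Icc 1 (2 ^ j), haarC A B j k g * haarH A B j k x
      = haarC A B j K g * haarH A B j K x :=
  Finset.sum_eq_single_of_mem K hK fun k hk hkK => by
    rw [haarH_eq_zero hAB hx (Finset.mem_Icc.mp hk).1 hkK, mul_zero]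

lemma haarPartialSum_succ (g : ℝ → ℝ) (n : ℕ) (x : ℝ) :
    haarPartialSum A B g (n + 1) x = haarPartialSum A B g n x +
      ∑ k ∈ Finset.Icc 1 (2 ^ n), haarC A B n k g * haarH A B n k x := by
  simp only [haarPartialSum, Finset.sum_range_succ, add_assoc]

lemma haarPartialSum_eq_haarMean (hAB : A ≤ B) (hg : IntervalIntegrable g volume A B) (n : ℕ)
    {K : ℕ} (hK : K ∈ Finset.Icc 1 (2 ^ n)) {x : ℝ} (hx : x ∈ haarI A B n K) :
    haarPartialSum A B g n x = haarMean A B n K g := by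
  induction n generalizing K with
  | zero =>
    obtain rfl : K = 1 := by simpa using hK
    rw [haarI_zero_one] at hx
    simp [haarPartialSum, haarC0_mul_haarH0 hAB g hx]
  | succ n ih =>
    rw [Finset.mem_Icc, pow_succ] at hK
    obtain ⟨P, hP, hKP⟩ : ∃ P ∈ Finset.Icc 1 (2 ^ n), K = 2 * P - 1 ∨ K = 2 * P :=
      ⟨(K + 1) / 2, Finset.mem_Icc.mpr ⟨by omega, by omega⟩, by omega⟩
    have hxP : x ∈ haarI A B n P := by
      rw [haarI_eq_union hAB n (Finset.mem_Icc.mp hP).1]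
      rcases hKP with rfl | rfl
      exacts [Or.inl hx, Or.inr hx]
    rw [haarPartialSum_succ, ih hP hxP, sum_haarC_mul_haarH_of_mem hAB g hP hxP,
      haarMean_eq_add_div_two hAB hg hP]
    rcases hKP with rfl | rfl
    · rw [haarC_mul_haarH_of_mem_left hAB hg hP hx]
      ring
    · rw [haarC_mul_haarH_of_mem_right hAB hg hP hx]
      ring

lemma haarMean_eq_inv_mul (g : ℝ → ℝ) (j : ℕ) {k : ℕ} (hk : 1 ≤ k) :
    haarMean A B j k g = (haarPt A B j k - haarPt A B j (k - 1))⁻¹ *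
      ∫ t in haarPt A B j (k - 1)..haarPt A B j k, g t := by
  rw [haarMean, haarPt_sub_haarPt_pred j hk, inv_div]

end

/-- The truncated Haar series approximates `g` up to `(B - A) 2^{-j* - 2} ‖g'‖_∞`
on `(A, B]` (Lemma 5.3(iii) of Grama–Neumann). -/
theorem haar_truncation_error (A B : ℝ) (hAB : A < B) (g : ℝ → ℝ)
    (hg : ContDiff ℝ 1 g)
    (hg'_bdd : BddAbove (Set.range fun x => |deriv g x|))
    (jstar : ℕ) (x : ℝ) (hx : x ∈ Set.Ioc A B) :
    |g x - (haarC0 A B g * haarH0 A B x +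
        ∑ j ∈ Finset.range (jstar + 1), ∑ k ∈ Finset.Icc 1 (2 ^ j),
          haarC A B j k g * haarH A B j k x)|
      ≤ (B - A) * ((2 : ℝ) ^ (jstar + 2))⁻¹ * ⨆ y, |deriv g y| := by
  set C := ⨆ y, |deriv g y|
  have hC : 0 ≤ C := (abs_nonneg _).trans (le_ciSup hg'_bdd 0)
  have hLip : LipschitzWith C.toNNReal g :=
    lipschitzWith_of_nnnorm_deriv_le (hg.differentiable one_ne_zero) fun y => by
      rw [← NNReal.coe_le_coe, coe_nnnorm, Real.coe_toNNReal _ hC, Real.norm_eq_abs]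
      exact le_ciSup hg'_bdd y
  obtain ⟨K, hK, hxK⟩ := exists_mem_haarI hAB.le hx (jstar + 1)
  have hlen := haarPt_sub_haarPt_pred (A := A) (B := B) (jstar + 1) (Finset.mem_Icc.mp hK).1
  change |g x - haarPartialSum A B g (jstar + 1) x| ≤ _
  rw [haarPartialSum_eq_haarMean hAB.le (hg.continuous.intervalIntegrable A B) _ hK hxK,
    haarMean_eq_inv_mul g _ (Finset.mem_Icc.mp hK).1]
  calc _ ≤ C.toNNReal * (haarPt A B (jstar + 1) K - haarPt A B (jstar + 1) (K - 1)) / 2 :=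
        abs_sub_interval_mean_le (by rw [← sub_pos, hlen]; positivity) hLip.lipschitzOnWith
          (Ioc_subset_Icc_self hxK)
    _ = _ := by
        rw [Real.coe_toNNReal _ hC, hlen, pow_succ 2 (jstar + 1)]
        field_simp
end

section
/- Let p be a probability density on ℝ, let M > 0, and let f, f_0: ℝ → ℝ be measurable with sup_x |f(x)| ≤ M and sup_x |f_0(x)| ≤ M. Let ψ_f and ψ_{f_0} be probability densities that are invariant for f and f_0 respectively, and assume ρ := (1/2) sup_{x_1, x_2 ∈ [−M, M]} ∫ |p(x − x_1) − p(x − x_2)| dx < 1. Then ∫ ( √(ψ_f(x)) − √(ψ_{f_0}(x)) )² dx ≤ (1 − ρ)^{−1} · sup_{u ∈ [0, ‖f − f_0‖_∞]} ∫ |p(x) − p(x − u)| dx, where ‖f − f_0‖_∞ = sup_x |f(x) − f_0(x)|. -/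
/-!
Write `g = ψf - ψf0` and `P_h` for the transition operator with kernel `p (x - h y)`.
Invariance gives `g = P_f g + (P_f - P_f0) ψf0`; the second term has `L¹` norm at most
`sup_{u ∈ [0, ‖f - f0‖_∞]} ∫ |p - p (· - u)|`. For the first, `∫ g = 0` lets one couple the
positive and negative parts `g⁺, g⁻` (both of mass `m`):
`m • P_f g (x) = ∬ (p (x - f y₁) - p (x - f y₂)) g⁺ y₁ g⁻ y₂`, so that `‖P_f g‖₁ ≤ ρ ‖g‖₁`
(Dobrushin's contraction). Hence `(1 - ρ) ‖g‖₁` is bounded by the perturbation term, and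
`(√a - √b)² ≤ |a - b|` bounds the Hellinger distance by `‖g‖₁`.
-/

open MeasureTheory Real Function
open scoped ENNReal

section

variable {α β : Type*} [MeasurableSpace α] [MeasurableSpace β] {μ : Measure α} {ν : Measure β}

theorem lintegral_enorm_integral_mul_le [SFinite μ] [SFinite ν] {d : α → β → ℝ} {h : β → ℝ}
    (hd : Measurable (uncurry d)) (hh : AEMeasurable h ν) {C : ℝ≥0∞}
    (hC : ∀ y, ∫⁻ x, ‖d x y‖ₑ ∂μ ≤ C) :
    ∫⁻ x, ‖∫ y, d x y * h y ∂ν‖ₑ ∂μ ≤ C * ∫⁻ y, ‖h y‖ₑ ∂ν := by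
  calc ∫⁻ x, ‖∫ y, d x y * h y ∂ν‖ₑ ∂μ
      ≤ ∫⁻ x, ∫⁻ y, ‖d x y‖ₑ * ‖h y‖ₑ ∂ν ∂μ :=
        lintegral_mono fun x =>
          (enorm_integral_le_lintegral_enorm _).trans_eq (by simp only [enorm_mul])
    _ = ∫⁻ y, (∫⁻ x, ‖d x y‖ₑ ∂μ) * ‖h y‖ₑ ∂ν := by
        rw [lintegral_lintegral_swap (hd.enorm.aemeasurable.mul hh.enorm.comp_snd)]
        exact lintegral_congr fun y =>
          lintegral_mul_const'' _ (hd.comp measurable_prodMk_right).enorm.aemeasurable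
    _ ≤ ∫⁻ y, C * ‖h y‖ₑ ∂ν := lintegral_mono fun y => mul_le_mul_left (hC y) _
    _ = C * ∫⁻ y, ‖h y‖ₑ ∂ν := lintegral_const_mul'' _ hh.enorm

theorem lintegral_enorm_le_ofReal {f : α → ℝ} (hf : Integrable f μ) {C : ℝ}
    (h : ∫ x, |f x| ∂μ ≤ C) : ∫⁻ x, ‖f x‖ₑ ∂μ ≤ ENNReal.ofReal C := by
  rw [← ofReal_integral_norm_eq_lintegral_enorm hf]
  exact ENNReal.ofReal_le_ofReal h

theorem integral_prod_sub_mul_mul [SFinite ν] {a u v : β → ℝ}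
    (hau : Integrable (fun y => a y * u y) ν) (hav : Integrable (fun y => a y * v y) ν)
    (hu : Integrable u ν) (hv : Integrable v ν) :
    ∫ z : β × β, (a z.1 - a z.2) * (u z.1 * v z.2) ∂(ν.prod ν) =
      (∫ y, a y * u y ∂ν) * (∫ y, v y ∂ν) - (∫ y, u y ∂ν) * ∫ y, a y * v y ∂ν := by
  have hprod : (fun z : β × β => (a z.1 - a z.2) * (u z.1 * v z.2)) =
      fun z => a z.1 * u z.1 * v z.2 - u z.1 * (a z.2 * v z.2) := by
    ext; ring
  rw [hprod, integral_sub (hau.mul_prod hv) (hu.mul_prod hav),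
    integral_prod_mul (fun y => a y * u y) v, integral_prod_mul u (fun y => a y * v y)]

/-- `k x y` is the density at `x` of the transition out of `y`. -/
structure IsTransitionDensity (μ : Measure α) (k : α → β → ℝ) : Prop where
  measurable : Measurable (uncurry k)
  nonneg : ∀ x y, 0 ≤ k x y
  integral_eq_one : ∀ y, ∫ x, k x y ∂μ = 1

namespace IsTransitionDensity

variable {k : α → β → ℝ}

theorem integrable (hk : IsTransitionDensity μ k) (y : β) : Integrable (k · y) μ :=
  Integrable.of_integral_ne_zero (by rw [hk.integral_eq_one]; exact one_ne_zero)

theorem integral_abs_sub_le_two (hk : IsTransitionDensity μ k) (y₁ y₂ : β) :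
    ∫ x, |k x y₁ - k x y₂| ∂μ ≤ 2 :=
  calc ∫ x, |k x y₁ - k x y₂| ∂μ ≤ ∫ x, (k x y₁ + k x y₂) ∂μ :=
        integral_mono ((hk.integrable y₁).sub (hk.integrable y₂)).abs
          ((hk.integrable y₁).add (hk.integrable y₂)) fun x =>
            (abs_sub _ _).trans_eq
              (by rw [abs_of_nonneg (hk.nonneg x y₁), abs_of_nonneg (hk.nonneg x y₂)])
    _ = 2 := by
      rw [integral_add (hk.integrable y₁) (hk.integrable y₂), hk.integral_eq_one,
        hk.integral_eq_one]
      norm_num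

variable [SFinite μ] [SFinite ν] {h : β → ℝ}

theorem integrable_prod_mul (hk : IsTransitionDensity μ k) (hh : Integrable h ν) :
    Integrable (fun z : α × β => k z.1 z.2 * h z.2) (μ.prod ν) := by
  have hmeas : AEStronglyMeasurable (fun z : α × β => k z.1 z.2 * h z.2) (μ.prod ν) :=
    hk.measurable.aestronglyMeasurable.mul
      (hh.1.comp_quasiMeasurePreserving Measure.quasiMeasurePreserving_snd)
  refine (integrable_prod_iff' hmeas).2 ⟨?_, ?_⟩
  · exact ae_of_all _ fun y => (hk.integrable y).mul_const (h y)
  · simpa only [norm_mul, Real.norm_of_nonneg (hk.nonneg _ _), integral_mul_const,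
      hk.integral_eq_one, one_mul] using hh.norm

theorem ae_integrable_mul (hk : IsTransitionDensity μ k) (hh : Integrable h ν) :
    ∀ᵐ x ∂μ, Integrable (fun y => k x y * h y) ν :=
  (hk.integrable_prod_mul hh).prod_right_ae

theorem integrable_integral_mul (hk : IsTransitionDensity μ k) (hh : Integrable h ν) :
    Integrable (fun x => ∫ y, k x y * h y ∂ν) μ :=
  (hk.integrable_prod_mul hh).integral_prod_left

theorem lintegral_enorm_integral_mul_sub_le (hk : IsTransitionDensity μ k) {ρ : ℝ≥0∞}
    (hρ : ∀ y₁ y₂, ∫⁻ x, ‖k x y₁ - k x y₂‖ₑ ∂μ ≤ 2 * ρ) {u v : β → ℝ} (hu : Integrable u ν)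
    (hv : Integrable v ν) (hu₀ : 0 ≤ u) (hv₀ : 0 ≤ v) :
    ∫⁻ x, ‖(∫ y, k x y * u y ∂ν) * (∫ y, v y ∂ν) - (∫ y, u y ∂ν) * ∫ y, k x y * v y ∂ν‖ₑ ∂μ
      ≤ 2 * ρ * (ENNReal.ofReal (∫ y, u y ∂ν) * ENNReal.ofReal (∫ y, v y ∂ν)) := by
  have hcoupling : ∀ᵐ x ∂μ,
      (∫ y, k x y * u y ∂ν) * (∫ y, v y ∂ν) - (∫ y, u y ∂ν) * ∫ y, k x y * v y ∂ν =
        ∫ z : β × β, (k x z.1 - k x z.2) * (u z.1 * v z.2) ∂(ν.prod ν) := by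
    filter_upwards [hk.ae_integrable_mul hu, hk.ae_integrable_mul hv] with x hku hkv
    exact (integral_prod_sub_mul_mul hku hkv hu hv).symm
  have hmass : ∀ w : β → ℝ, Integrable w ν → 0 ≤ w →
      ∫⁻ y, ‖w y‖ₑ ∂ν = ENNReal.ofReal (∫ y, w y ∂ν) := fun w hw hw₀ => by
    rw [lintegral_enorm_of_nonneg hw₀, ofReal_integral_eq_lintegral_ofReal hw (ae_of_all _ hw₀)]
  calc _ = ∫⁻ x, ‖∫ z : β × β, (k x z.1 - k x z.2) * (u z.1 * v z.2) ∂(ν.prod ν)‖ₑ ∂μ :=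
        lintegral_congr_ae (hcoupling.mono fun x hx => by rw [hx])
    _ ≤ 2 * ρ * ∫⁻ z : β × β, ‖u z.1 * v z.2‖ₑ ∂(ν.prod ν) :=
        lintegral_enorm_integral_mul_le
          ((hk.measurable.comp (measurable_fst.prodMk measurable_snd.fst)).sub
            (hk.measurable.comp (measurable_fst.prodMk measurable_snd.snd)))
          (hu.1.aemeasurable.comp_fst.mul hv.1.aemeasurable.comp_snd) fun z => hρ z.1 z.2
    _ = _ := by
        simp_rw [enorm_mul]
        rw [lintegral_prod_mul hu.1.aemeasurable.enorm hv.1.aemeasurable.enorm, hmass u hu hu₀,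
          hmass v hv hv₀]

theorem lintegral_enorm_integral_mul_le_of_integral_eq_zero (hk : IsTransitionDensity μ k)
    {ρ : ℝ≥0∞} (hρ : ∀ y₁ y₂, ∫⁻ x, ‖k x y₁ - k x y₂‖ₑ ∂μ ≤ 2 * ρ) {g : β → ℝ}
    (hg : Integrable g ν) (hg₀ : ∫ y, g y ∂ν = 0) :
    ∫⁻ x, ‖∫ y, k x y * g y ∂ν‖ₑ ∂μ ≤ ρ * ∫⁻ y, ‖g y‖ₑ ∂ν := by
  set gpos := fun y => max (g y) 0
  set gneg := fun y => max (-g y) 0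
  have hgpos : Integrable gpos ν := hg.pos_part
  have hgneg : Integrable gneg ν := hg.neg_part
  set m := ∫ y, gpos y ∂ν
  have hm : 0 ≤ m := integral_nonneg fun y => le_max_right _ _
  have hmneg : ∫ y, gneg y ∂ν = m := by
    have := integral_sub hgpos hgneg
    simp only [gpos, gneg, max_zero_sub_eq_self, hg₀] at this
    linarith
  have hnorm : ∫⁻ y, ‖g y‖ₑ ∂ν = 2 * ENNReal.ofReal m := by
    rw [← ofReal_integral_norm_eq_lintegral_enorm hg]
    simp_rw [Real.norm_eq_abs, ← max_zero_add_max_neg_zero_eq_abs_self]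
    rw [integral_add hgpos hgneg, hmneg, ← two_mul, ENNReal.ofReal_mul zero_le_two,
      ENNReal.ofReal_ofNat]
  have hsplit : ∀ᵐ x ∂μ,
      ‖(∫ y, k x y * gpos y ∂ν) * (∫ y, gneg y ∂ν) - m * ∫ y, k x y * gneg y ∂ν‖ₑ =
        ENNReal.ofReal m * ‖∫ y, k x y * g y ∂ν‖ₑ := by
    filter_upwards [hk.ae_integrable_mul hgpos, hk.ae_integrable_mul hgneg] with x hpos hneg
    rw [hmneg, mul_comm _ m, ← mul_sub, ← integral_sub hpos hneg, enorm_mul,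
      Real.enorm_of_nonneg hm]
    simp only [gpos, gneg, ← mul_sub, max_zero_sub_eq_self]
  have hcoupling := hk.lintegral_enorm_integral_mul_sub_le hρ hgpos hgneg
    (fun y => le_max_right _ _) (fun y => le_max_right _ _)
  rw [lintegral_congr_ae hsplit, lintegral_const_mul' _ _ ENNReal.ofReal_ne_top, hmneg]
    at hcoupling
  rcases hm.eq_or_lt with hm0 | hmpos
  · have hg_ae : g =ᵐ[ν] 0 := by
      rw [← hm0, ENNReal.ofReal_zero, mul_zero,
        lintegral_eq_zero_iff' hg.1.aemeasurable.enorm] at hnorm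
      exact hnorm.mono fun y hy => enorm_eq_zero.1 hy
    have hPg : ∀ x, ∫ y, k x y * g y ∂ν = 0 := fun x => by
      simpa using integral_congr_ae (hg_ae.mono fun y hy => congrArg (k x y * ·) hy)
    simp [hPg]
  · rw [hnorm, ← ENNReal.mul_le_mul_iff_right (ENNReal.ofReal_pos.2 hmpos).ne'
      ENNReal.ofReal_ne_top]
    exact hcoupling.trans_eq (by ring)

end IsTransitionDensity

theorem ae_sub_eq_of_invariant [SFinite μ] {k k₀ : α → α → ℝ} (hk : IsTransitionDensity μ k)
    (hk₀ : IsTransitionDensity μ k₀) {ψ ψ₀ : α → ℝ} (hψ : Integrable ψ μ) (hψ₀ : Integrable ψ₀ μ)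
    (hinv : ∀ᵐ x ∂μ, ψ x = ∫ y, k x y * ψ y ∂μ)
    (hinv₀ : ∀ᵐ x ∂μ, ψ₀ x = ∫ y, k₀ x y * ψ₀ y ∂μ) :
    ∀ᵐ x ∂μ, ψ x - ψ₀ x =
      (∫ y, k x y * (ψ y - ψ₀ y) ∂μ) + ∫ y, (k x y - k₀ x y) * ψ₀ y ∂μ := by
  filter_upwards [hinv, hinv₀, hk.ae_integrable_mul hψ, hk.ae_integrable_mul hψ₀,
    hk₀.ae_integrable_mul hψ₀] with x hx hx₀ hkψ hkψ₀ hk₀ψ₀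
  simp only [mul_sub, sub_mul]
  rw [integral_sub hkψ hkψ₀, integral_sub hkψ₀ hk₀ψ₀, ← hx, ← hx₀]
  ring

theorem integral_abs_sub_le_of_invariant [SFinite μ] {k k₀ : α → α → ℝ}
    (hk : IsTransitionDensity μ k) (hk₀ : IsTransitionDensity μ k₀) {ψ ψ₀ : α → ℝ}
    (hψ : ∫ x, ψ x ∂μ = 1) (hψ₀_nonneg : ∀ x, 0 ≤ ψ₀ x) (hψ₀ : ∫ x, ψ₀ x ∂μ = 1)
    (hinv : ∀ᵐ x ∂μ, ψ x = ∫ y, k x y * ψ y ∂μ)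
    (hinv₀ : ∀ᵐ x ∂μ, ψ₀ x = ∫ y, k₀ x y * ψ₀ y ∂μ) {ρ D : ℝ}
    (hρ : ∀ y₁ y₂, ∫ x, |k x y₁ - k x y₂| ∂μ ≤ 2 * ρ) (hρ₁ : ρ < 1)
    (hD : ∀ y, ∫ x, |k x y - k₀ x y| ∂μ ≤ D) :
    ∫ x, |ψ x - ψ₀ x| ∂μ ≤ (1 - ρ)⁻¹ * D := by
  have hψi : Integrable ψ μ := .of_integral_ne_zero (by rw [hψ]; exact one_ne_zero)
  have hψ₀i : Integrable ψ₀ μ := .of_integral_ne_zero (by rw [hψ₀]; exact one_ne_zero)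
  obtain ⟨y⟩ : Nonempty α := by
    by_contra hα
    rw [not_nonempty_iff] at hα
    simp [integral_of_isEmpty] at hψ₀
  have hρ₀ : 0 ≤ ρ := by simpa using hρ y y
  have hD₀ : 0 ≤ D := (integral_nonneg fun x => abs_nonneg _).trans (hD y)
  set g := fun x => ψ x - ψ₀ x
  have hg : Integrable g μ := hψi.sub hψ₀i
  have hdecomp : ∀ᵐ x ∂μ,
      g x = (∫ y, k x y * g y ∂μ) + ∫ y, (k x y - k₀ x y) * ψ₀ y ∂μ :=
    ae_sub_eq_of_invariant hk hk₀ hψi hψ₀i hinv hinv₀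
  have hcontract :
      ∫⁻ x, ‖∫ y, k x y * g y ∂μ‖ₑ ∂μ ≤ ENNReal.ofReal ρ * ∫⁻ x, ‖g x‖ₑ ∂μ := by
    refine hk.lintegral_enorm_integral_mul_le_of_integral_eq_zero (fun y₁ y₂ => ?_) hg
      (by simp only [g, integral_sub hψi hψ₀i, hψ, hψ₀, sub_self])
    rw [← ENNReal.ofReal_ofNat 2, ← ENNReal.ofReal_mul zero_le_two]
    exact lintegral_enorm_le_ofReal ((hk.integrable y₁).sub (hk.integrable y₂)) (hρ y₁ y₂)
  have hperturb : ∫⁻ x, ‖∫ y, (k x y - k₀ x y) * ψ₀ y ∂μ‖ₑ ∂μ ≤ ENNReal.ofReal D := by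
    refine (lintegral_enorm_integral_mul_le (hk.measurable.sub hk₀.measurable)
      hψ₀i.1.aemeasurable fun y =>
        lintegral_enorm_le_ofReal ((hk.integrable y).sub (hk₀.integrable y)) (hD y)).trans_eq ?_
    rw [← ofReal_integral_norm_eq_lintegral_enorm hψ₀i]
    simp only [Real.norm_of_nonneg (hψ₀_nonneg _), hψ₀, ENNReal.ofReal_one, mul_one]
  have hL1 : ∫⁻ x, ‖g x‖ₑ ∂μ ≤ ENNReal.ofReal ρ * ∫⁻ x, ‖g x‖ₑ ∂μ + ENNReal.ofReal D :=
    calc ∫⁻ x, ‖g x‖ₑ ∂μ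
        ≤ ∫⁻ x, ‖∫ y, k x y * g y ∂μ‖ₑ + ‖∫ y, (k x y - k₀ x y) * ψ₀ y ∂μ‖ₑ ∂μ :=
          lintegral_mono_ae (hdecomp.mono fun x hx => hx ▸ enorm_add_le _ _)
      _ = ∫⁻ x, ‖∫ y, k x y * g y ∂μ‖ₑ ∂μ + ∫⁻ x, ‖∫ y, (k x y - k₀ x y) * ψ₀ y ∂μ‖ₑ ∂μ :=
          lintegral_add_left' (hk.integrable_integral_mul hg).1.aemeasurable.enorm _
      _ ≤ _ := add_le_add hcontract hperturb
  rw [← ofReal_integral_norm_eq_lintegral_enorm hg, ← ENNReal.ofReal_mul hρ₀,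
    ← ENNReal.ofReal_add (by positivity) hD₀,
    ENNReal.ofReal_le_ofReal_iff (by positivity)] at hL1
  simp only [g, Real.norm_eq_abs] at hL1
  rw [inv_mul_eq_div, le_div_iff₀ (sub_pos.2 hρ₁)]
  linarith

end

theorem isTransitionDensity_comp_sub {p : ℝ → ℝ} (hp_meas : Measurable p)
    (hp_nonneg : ∀ x, 0 ≤ p x) (hp_int : ∫ x, p x = 1) {f : ℝ → ℝ} (hf : Measurable f) :
    IsTransitionDensity volume fun x y => p (x - f y) where
  measurable := hp_meas.comp (measurable_fst.sub (hf.comp measurable_snd))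
  nonneg _ _ := hp_nonneg _
  integral_eq_one y := (integral_sub_right_eq_self p (f y)).trans hp_int

theorem integral_abs_sub_comp_sub_eq (p : ℝ → ℝ) (a b : ℝ) :
    ∫ x, |p (x - a) - p (x - b)| = ∫ x, |p x - p (x - |a - b|)| := by
  have shift : ∀ a b : ℝ, ∫ x, |p (x - a) - p (x - b)| = ∫ x, |p x - p (x - (b - a))| :=
    fun a b => by
      rw [← integral_sub_right_eq_self (fun x => |p x - p (x - (b - a))|) a]
      simp only [sub_sub_sub_cancel_right]
  rcases le_total a b with hab | hba
  · rw [abs_of_nonpos (sub_nonpos.2 hab), neg_sub, shift]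
  · simp_rw [abs_sub_comm (p (_ - a))]
    rw [abs_of_nonneg (sub_nonneg.2 hba), shift]

theorem integral_abs_sub_comp_sub_le_two_mul_sSup {p : ℝ → ℝ}
    (hp : IsTransitionDensity volume fun x y : ℝ => p (x - y)) {M a b : ℝ} (ha : |a| ≤ M)
    (hb : |b| ≤ M) :
    ∫ x, |p (x - a) - p (x - b)| ≤
      2 * sSup ((fun q : ℝ × ℝ => (1 / 2) * ∫ x, |p (x - q.1) - p (x - q.2)|) ''
        (Set.Icc (-M) M ×ˢ Set.Icc (-M) M)) := by
  have hbdd : BddAbove ((fun q : ℝ × ℝ => (1 / 2) * ∫ x, |p (x - q.1) - p (x - q.2)|) ''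
      (Set.Icc (-M) M ×ˢ Set.Icc (-M) M)) := by
    refine ⟨1, ?_⟩
    rintro _ ⟨q, -, rfl⟩
    show (1 / 2) * ∫ x, |p (x - q.1) - p (x - q.2)| ≤ 1
    linarith [hp.integral_abs_sub_le_two q.1 q.2]
  have := le_csSup hbdd ⟨(a, b), ⟨abs_le.1 ha, abs_le.1 hb⟩, rfl⟩
  linarith

theorem integral_abs_sub_comp_sub_le_sSup {p : ℝ → ℝ}
    (hp : IsTransitionDensity volume fun x y : ℝ => p (x - y)) {S a b : ℝ} (hab : |a - b| ≤ S) :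
    ∫ x, |p (x - a) - p (x - b)| ≤ sSup ((fun u : ℝ => ∫ x, |p x - p (x - u)|) '' Set.Icc 0 S) := by
  have hbdd : BddAbove ((fun u : ℝ => ∫ x, |p x - p (x - u)|) '' Set.Icc 0 S) := by
    refine ⟨2, ?_⟩
    rintro _ ⟨u, -, rfl⟩
    simpa using hp.integral_abs_sub_le_two 0 u
  rw [integral_abs_sub_comp_sub_eq]
  exact le_csSup hbdd ⟨_, ⟨abs_nonneg _, hab⟩, rfl⟩

theorem sq_sqrt_sub_sqrt_le_abs_sub {a b : ℝ} (ha : 0 ≤ a) (hb : 0 ≤ b) :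
    (√a - √b) ^ 2 ≤ |a - b| :=
  calc (√a - √b) ^ 2 = |√a - √b| * |√a - √b| := by rw [← sq, sq_abs]
    _ ≤ |√a - √b| * (√a + √b) := by
        gcongr
        simpa only [abs_of_nonneg (sqrt_nonneg _)] using abs_sub √a √b
    _ = |a - b| := by
        rw [← abs_of_nonneg (add_nonneg (sqrt_nonneg a) (sqrt_nonneg b)), ← abs_mul, mul_comm,
          ← sq_sub_sq, sq_sqrt ha, sq_sqrt hb]

theorem hellinger_stationary_densities_general
    (p : ℝ → ℝ) (hp_meas : Measurable p) (hp_nonneg : ∀ x, 0 ≤ p x)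
    (hp_int : ∫ x, p x = 1)
    (M : ℝ)
    (f f0 : ℝ → ℝ) (hf_meas : Measurable f) (hf0_meas : Measurable f0)
    (hf_bdd : ∀ x, |f x| ≤ M) (hf0_bdd : ∀ x, |f0 x| ≤ M)
    (ψf ψf0 : ℝ → ℝ)
    (hψf_nonneg : ∀ x, 0 ≤ ψf x) (hψf_int : ∫ x, ψf x = 1)
    (hψf0_nonneg : ∀ x, 0 ≤ ψf0 x) (hψf0_int : ∫ x, ψf0 x = 1)
    (hinv_f : ∀ᵐ x ∂(volume : Measure ℝ), ψf x = ∫ y, p (x - f y) * ψf y)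
    (hinv_f0 : ∀ᵐ x ∂(volume : Measure ℝ), ψf0 x = ∫ y, p (x - f0 y) * ψf0 y)
    (ρ : ℝ)
    (hρ_def : ρ = sSup ((fun q : ℝ × ℝ => (1 / 2) * ∫ x, |p (x - q.1) - p (x - q.2)|) ''
        (Set.Icc (-M) M ×ˢ Set.Icc (-M) M)))
    (hρ_lt_one : ρ < 1) :
    ∫ x, (Real.sqrt (ψf x) - Real.sqrt (ψf0 x)) ^ 2
      ≤ (1 - ρ)⁻¹ *
        sSup ((fun u : ℝ => ∫ x, |p x - p (x - u)|) ''
          Set.Icc 0 (⨆ x, |f x - f0 x|)) := by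
  have hshift : IsTransitionDensity volume fun x y : ℝ => p (x - y) :=
    isTransitionDensity_comp_sub hp_meas hp_nonneg hp_int measurable_id
  have hρ : ∀ y₁ y₂, ∫ x, |p (x - f y₁) - p (x - f y₂)| ≤ 2 * ρ := fun y₁ y₂ =>
    hρ_def ▸ integral_abs_sub_comp_sub_le_two_mul_sSup hshift (hf_bdd y₁) (hf_bdd y₂)
  have hS : BddAbove (Set.range fun x => |f x - f0 x|) :=
    ⟨M + M, by
      rintro _ ⟨x, rfl⟩
      exact (abs_sub _ _).trans (add_le_add (hf_bdd x) (hf0_bdd x))⟩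
  have hD : ∀ y, ∫ x, |p (x - f y) - p (x - f0 y)| ≤
      sSup ((fun u : ℝ => ∫ x, |p x - p (x - u)|) '' Set.Icc 0 (⨆ x, |f x - f0 x|)) :=
    fun y => integral_abs_sub_comp_sub_le_sSup hshift (le_ciSup hS y)
  have hψf : Integrable ψf := .of_integral_ne_zero (by rw [hψf_int]; exact one_ne_zero)
  have hψf0 : Integrable ψf0 := .of_integral_ne_zero (by rw [hψf0_int]; exact one_ne_zero)
  calc ∫ x, (√(ψf x) - √(ψf0 x)) ^ 2 ≤ ∫ x, |ψf x - ψf0 x| :=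
        integral_mono_of_nonneg (ae_of_all _ fun x => sq_nonneg _) (hψf.sub hψf0).abs
          (ae_of_all _ fun x => sq_sqrt_sub_sqrt_le_abs_sub (hψf_nonneg x) (hψf0_nonneg x))
    _ ≤ _ := integral_abs_sub_le_of_invariant
        (isTransitionDensity_comp_sub hp_meas hp_nonneg hp_int hf_meas)
        (isTransitionDensity_comp_sub hp_meas hp_nonneg hp_int hf0_meas)
        hψf_int hψf0_nonneg hψf0_int hinv_f hinv_f0 hρ hρ_lt_one hD

/-- Hellinger-type bound between the stationary densities of two autoregressive
processes (Lemma 6.1 of Grama–Neumann). -/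
theorem hellinger_stationary_densities
    (p : ℝ → ℝ) (hp_meas : Measurable p) (hp_nonneg : ∀ x, 0 ≤ p x)
    (hp_int : ∫ x, p x = 1)
    (M : ℝ) (hM : 0 < M)
    (f f0 : ℝ → ℝ) (hf_meas : Measurable f) (hf0_meas : Measurable f0)
    (hf_bdd : ∀ x, |f x| ≤ M) (hf0_bdd : ∀ x, |f0 x| ≤ M)
    (ψf ψf0 : ℝ → ℝ)
    (hψf_meas : Measurable ψf) (hψf_nonneg : ∀ x, 0 ≤ ψf x) (hψf_int : ∫ x, ψf x = 1)
    (hψf0_meas : Measurable ψf0) (hψf0_nonneg : ∀ x, 0 ≤ ψf0 x) (hψf0_int : ∫ x, ψf0 x = 1)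
    (hinv_f : ∀ᵐ x ∂(volume : Measure ℝ), ψf x = ∫ y, p (x - f y) * ψf y)
    (hinv_f0 : ∀ᵐ x ∂(volume : Measure ℝ), ψf0 x = ∫ y, p (x - f0 y) * ψf0 y)
    (ρ : ℝ)
    (hρ_def : ρ = sSup ((fun q : ℝ × ℝ => (1 / 2) * ∫ x, |p (x - q.1) - p (x - q.2)|) ''
        (Set.Icc (-M) M ×ˢ Set.Icc (-M) M)))
    (hρ_lt_one : ρ < 1) :
    ∫ x, (Real.sqrt (ψf x) - Real.sqrt (ψf0 x)) ^ 2
      ≤ (1 - ρ)⁻¹ *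
        sSup ((fun u : ℝ => ∫ x, |p x - p (x - u)|) ''
          Set.Icc 0 (⨆ x, |f x - f0 x|)) :=
  hellinger_stationary_densities_general p hp_meas hp_nonneg hp_int M f f0 hf_meas hf0_meas hf_bdd
    hf0_bdd ψf ψf0 hψf_nonneg hψf_int hψf0_nonneg hψf0_int hinv_f hinv_f0 ρ hρ_def hρ_lt_one
end

section
/- Let k: ℝ × ℝ → [0, ∞) be jointly measurable with ∫ k(x, y) dx = 1 for every y ∈ ℝ, and let φ: ℝ → ℝ be integrable with ∫ φ(y) dy = 0. Then ∫ | ∫ k(x, y) φ(y) dy | dx ≤ (1/2) · ( sup_{y_1, y_2 ∈ ℝ} ∫ | k(x, y_1) − k(x, y_2) | dx ) · ∫ |φ(y)| dy. -/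
open MeasureTheory Real

private lemma ofReal_integral_le_aux {f : ℝ → ℝ} (hf : ∀ a, 0 ≤ f a)
    (hm : AEStronglyMeasurable f (volume : Measure ℝ)) :
    ENNReal.ofReal (∫ a, f a) ≤ ∫⁻ a, ENNReal.ofReal (f a) := by
  rw [integral_eq_lintegral_of_nonneg_ae (Filter.Eventually.of_forall hf) hm]
  exact ENNReal.ofReal_toReal_le

private theorem kernel_contraction_aux
    (k : ℝ → ℝ → ℝ) (hk_meas : Measurable (Function.uncurry k))
    (hk_nonneg : ∀ x y, 0 ≤ k x y) (hk_int : ∀ y, ∫ x, k x y = 1)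
    (φ : ℝ → ℝ) (hφ_meas : Measurable φ) (hφ_int : Integrable φ)
    (hφ_zero : ∫ y, φ y = 0) :
    ∫ x, |∫ y, k x y * φ y|
      ≤ (1 / 2) * sSup (Set.range fun q : ℝ × ℝ => ∫ x, |k x q.1 - k x q.2|) *
          ∫ y, |φ y| := by
  set D := sSup (Set.range fun q : ℝ × ℝ => ∫ x, |k x q.1 - k x q.2|) with hD_def
  -- positive and negative parts
  set p : ℝ → ℝ := fun y => max (φ y) 0 with hp_def
  set n : ℝ → ℝ := fun y => max (-φ y) 0 with hn_def
  have hp_meas : Measurable p := hφ_meas.max measurable_const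
  have hn_meas : Measurable n := hφ_meas.neg.max measurable_const
  have hp_nonneg : ∀ y, 0 ≤ p y := fun y => le_max_right _ _
  have hn_nonneg : ∀ y, 0 ≤ n y := fun y => le_max_right _ _
  have hp_int : Integrable p := hφ_int.pos_part
  have hn_int : Integrable n := hφ_int.neg_part
  have hφ_eq : ∀ y, φ y = p y - n y := fun y =>
    (max_zero_sub_max_neg_zero_eq_self (φ y)).symm
  have habs_eq : ∀ y, |φ y| = p y + n y := fun y =>
    (max_zero_add_max_neg_zero_eq_abs_self (φ y)).symm
  have hp_le_abs : ∀ y, p y ≤ |φ y| := fun y => max_le (le_abs_self _) (abs_nonneg _)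
  have hn_le_abs : ∀ y, n y ≤ |φ y| := fun y => max_le (neg_le_abs _) (abs_nonneg _)
  set m := ∫ y, p y with hm_def
  have hm_nonneg : 0 ≤ m := integral_nonneg hp_nonneg
  have hmn : ∫ y, n y = m := by
    have h1 : ∫ y, φ y = m - ∫ y, n y := by
      rw [show φ = fun y => p y - n y from funext hφ_eq, integral_sub hp_int hn_int]
    rw [hφ_zero] at h1; linarith
  have habs_int : ∫ y, |φ y| = 2 * m := by
    calc ∫ y, |φ y| = ∫ y, (p y + n y) := by
          exact integral_congr_ae (Filter.Eventually.of_forall fun y => habs_eq y)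
      _ = m + m := by rw [integral_add hp_int hn_int, hmn]
      _ = 2 * m := by ring
  rcases eq_or_lt_of_le hm_nonneg with hm | hm
  · -- degenerate case : φ = 0 a.e.
    have hp0 : p =ᵐ[volume] 0 :=
      (integral_eq_zero_iff_of_nonneg hp_nonneg hp_int).mp hm.symm
    have hn0 : n =ᵐ[volume] 0 := by
      refine (integral_eq_zero_iff_of_nonneg hn_nonneg hn_int).mp (by rw [hmn, ← hm])
    have hφ0 : φ =ᵐ[volume] 0 := by
      filter_upwards [hp0, hn0] with y h1 h2
      have := hφ_eq y
      simp only [Pi.zero_apply] at h1 h2 ⊢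
      rw [this, h1, h2]; ring
    have hinner : ∀ x, (∫ y, k x y * φ y) = 0 := fun x =>
      integral_eq_zero_of_ae (hφ0.mono fun y hy => by simp [hy])
    have habs0 : ∫ y, |φ y| = 0 := by rw [habs_int, ← hm]; ring
    rw [habs0]
    simp [hinner]
  -- main case : m > 0
  have hki : ∀ y, Integrable (fun x => k x y) := by
    intro y
    by_contra h
    have := hk_int y
    rw [integral_undef h] at this
    norm_num at this
  have hbdd : BddAbove (Set.range fun q : ℝ × ℝ => ∫ x, |k x q.1 - k x q.2|) := by
    refine ⟨2, ?_⟩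
    rintro v ⟨q, rfl⟩
    calc (∫ x, |k x q.1 - k x q.2|) ≤ ∫ x, (k x q.1 + k x q.2) := by
          refine integral_mono ((hki q.1).sub (hki q.2)).abs ((hki q.1).add (hki q.2))
            fun x => abs_le.mpr ⟨?_, ?_⟩
          · have := hk_nonneg x q.1; have := hk_nonneg x q.2; linarith
          · have := hk_nonneg x q.1; have := hk_nonneg x q.2; linarith
      _ = 2 := by rw [integral_add (hki q.1) (hki q.2), hk_int, hk_int]; norm_num
  have hDle : ∀ y₁ y₂, (∫ x, |k x y₁ - k x y₂|) ≤ D := fun y₁ y₂ =>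
    le_csSup hbdd ⟨(y₁, y₂), rfl⟩
  have hD0 : 0 ≤ D := by
    have h := le_csSup hbdd ⟨((0 : ℝ), (0 : ℝ)), rfl⟩
    simpa using h
  -- a.e. finiteness of ∫⁻ y, k x y * |φ y|
  have hk1 : ∀ y, ∫⁻ x, ENNReal.ofReal (k x y) = 1 := fun y => by
    rw [← ofReal_integral_eq_lintegral_ofReal (hki y)
      (Filter.Eventually.of_forall fun x => hk_nonneg x y), hk_int y, ENNReal.ofReal_one]
  have hJmeas : Measurable fun x => ∫⁻ y, ENNReal.ofReal (k x y * |φ y|) := by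
    apply Measurable.lintegral_prod_right (f := fun x y => ENNReal.ofReal (k x y * |φ y|))
    exact (hk_meas.mul ((hφ_meas.abs).comp measurable_snd)).ennreal_ofReal
  have hφ_lint : ∫⁻ y, ENNReal.ofReal |φ y| < ⊤ :=
    (hasFiniteIntegral_iff_ofReal (Filter.Eventually.of_forall fun y => abs_nonneg _)).mp
      hφ_int.abs.hasFiniteIntegral
  have hJfin : ∀ᵐ x, (∫⁻ y, ENNReal.ofReal (k x y * |φ y|)) < ⊤ := by
    refine ae_lt_top hJmeas ?_
    have hswap : (∫⁻ x, ∫⁻ y, ENNReal.ofReal (k x y * |φ y|))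
        = ∫⁻ y, ∫⁻ x, ENNReal.ofReal (k x y * |φ y|) := by
      refine lintegral_lintegral_swap ?_
      exact ((hk_meas.mul ((hφ_meas.abs).comp measurable_snd)).ennreal_ofReal).aemeasurable
    rw [hswap]
    have hinner : ∀ y, (∫⁻ x, ENNReal.ofReal (k x y * |φ y|)) = ENNReal.ofReal |φ y| := by
      intro y
      calc (∫⁻ x, ENNReal.ofReal (k x y * |φ y|))
          = ∫⁻ x, ENNReal.ofReal (k x y) * ENNReal.ofReal |φ y| := by
            refine lintegral_congr fun x => ENNReal.ofReal_mul (hk_nonneg x y)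
        _ = (∫⁻ x, ENNReal.ofReal (k x y)) * ENNReal.ofReal |φ y| :=
            lintegral_mul_const' _ _ ENNReal.ofReal_ne_top
        _ = ENNReal.ofReal |φ y| := by rw [hk1 y, one_mul]
    rw [lintegral_congr hinner]
    exact hφ_lint.ne
  -- the kernel difference integral, as function of (x, y₁)
  set G : ℝ → ℝ → ℝ := fun x y₁ => ∫ y₂, |k x y₁ - k x y₂| * n y₂ with hG_def
  have hG_nonneg : ∀ x y₁, 0 ≤ G x y₁ := fun x y₁ =>
    integral_nonneg fun y₂ => mul_nonneg (abs_nonneg _) (hn_nonneg _)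
  have hGsm : ∀ x, StronglyMeasurable (G x) := by
    intro x
    have : Measurable fun z : ℝ × ℝ => |k x z.1 - k x z.2| * n z.2 :=
      (((hk_meas.of_uncurry_left.comp measurable_fst).sub
        (hk_meas.of_uncurry_left.comp measurable_snd)).abs).mul (hn_meas.comp measurable_snd)
    exact this.stronglyMeasurable.integral_prod_right'
  -- Step 2 : a.e. pointwise bound
  have hmain : ∀ᵐ x, m * |∫ y, k x y * φ y| ≤ ∫ y₁, p y₁ * G x y₁ := by
    filter_upwards [hJfin] with x hx
    have hA : Integrable (fun y => k x y * p y) := by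
      refine ⟨((hk_meas.of_uncurry_left).mul hp_meas).aestronglyMeasurable, ?_⟩
      rw [hasFiniteIntegral_iff_ofReal (Filter.Eventually.of_forall fun y =>
        mul_nonneg (hk_nonneg x y) (hp_nonneg y))]
      refine lt_of_le_of_lt (lintegral_mono fun y => ENNReal.ofReal_le_ofReal ?_) hx
      exact mul_le_mul_of_nonneg_left (hp_le_abs y) (hk_nonneg x y)
    have hB : Integrable (fun y => k x y * n y) := by
      refine ⟨((hk_meas.of_uncurry_left).mul hn_meas).aestronglyMeasurable, ?_⟩
      rw [hasFiniteIntegral_iff_ofReal (Filter.Eventually.of_forall fun y =>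
        mul_nonneg (hk_nonneg x y) (hn_nonneg y))]
      refine lt_of_le_of_lt (lintegral_mono fun y => ENNReal.ofReal_le_ofReal ?_) hx
      exact mul_le_mul_of_nonneg_left (hn_le_abs y) (hk_nonneg x y)
    set A := ∫ y, k x y * p y with hA_def
    set B := ∫ y, k x y * n y with hB_def
    set W : ℝ → ℝ := fun y₁ => ∫ y₂, (k x y₁ - k x y₂) * n y₂ with hW_def
    have claim1 : (∫ y, k x y * φ y) = A - B := by
      rw [hA_def, hB_def, ← integral_sub hA hB]
      refine integral_congr_ae (Filter.Eventually.of_forall fun y => ?_)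
      show k x y * φ y = k x y * p y - k x y * n y
      rw [hφ_eq y]; ring
    have claim2 : ∀ y₁, W y₁ = k x y₁ * m - B := by
      intro y₁
      have h1 : W y₁ = ∫ y₂, (k x y₁ * n y₂ - k x y₂ * n y₂) := by
        rw [hW_def]
        exact integral_congr_ae (Filter.Eventually.of_forall fun y₂ => by ring)
      rw [h1, integral_sub (hn_int.const_mul _) hB, integral_const_mul, hmn, hB_def]
    have hWle : ∀ y₁, |W y₁| ≤ G x y₁ := by
      intro y₁
      have h1 : |W y₁| ≤ ∫ y₂, |(k x y₁ - k x y₂) * n y₂| := by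
        simpa only [Real.norm_eq_abs] using
          norm_integral_le_integral_norm (fun y₂ => (k x y₁ - k x y₂) * n y₂)
      refine h1.trans (le_of_eq ?_)
      refine integral_congr_ae (Filter.Eventually.of_forall fun y₂ => ?_)
      show |(k x y₁ - k x y₂) * n y₂| = |k x y₁ - k x y₂| * n y₂
      rw [abs_mul, abs_of_nonneg (hn_nonneg y₂)]
    have hGle : ∀ y₁, G x y₁ ≤ k x y₁ * m + B := by
      intro y₁
      have : (∫ y₂, |k x y₁ - k x y₂| * n y₂) ≤ ∫ y₂, (k x y₁ * n y₂ + k x y₂ * n y₂) := by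
        refine integral_mono_of_nonneg
          (Filter.Eventually.of_forall fun y₂ => mul_nonneg (abs_nonneg _) (hn_nonneg _))
          ((hn_int.const_mul _).add hB)
          (Filter.Eventually.of_forall fun y₂ => ?_)
        have h2 : |k x y₁ - k x y₂| ≤ k x y₁ + k x y₂ := by
          have := hk_nonneg x y₁; have := hk_nonneg x y₂
          refine abs_le.mpr ⟨by linarith, by linarith⟩
        calc |k x y₁ - k x y₂| * n y₂ ≤ (k x y₁ + k x y₂) * n y₂ :=
              mul_le_mul_of_nonneg_right h2 (hn_nonneg y₂)
          _ = k x y₁ * n y₂ + k x y₂ * n y₂ := by ring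
      rw [integral_add (hn_int.const_mul _) hB, integral_const_mul, hmn] at this
      exact this
    have hPG_int : Integrable (fun y₁ => p y₁ * G x y₁) := by
      refine Integrable.mono' (g := fun y₁ => m * (k x y₁ * p y₁) + B * p y₁)
        ((hA.const_mul m).add (hp_int.const_mul B))
        ((hp_meas.mul (hGsm x).measurable).aestronglyMeasurable)
        (Filter.Eventually.of_forall fun y₁ => ?_)
      rw [Real.norm_eq_abs, abs_of_nonneg (mul_nonneg (hp_nonneg y₁) (hG_nonneg x y₁))]
      calc p y₁ * G x y₁ ≤ p y₁ * (k x y₁ * m + B) :=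
            mul_le_mul_of_nonneg_left (hGle y₁) (hp_nonneg y₁)
        _ = m * (k x y₁ * p y₁) + B * p y₁ := by ring
    have hiden : (∫ y₁, p y₁ * W y₁) = m * (A - B) := by
      have h1 : (fun y₁ => p y₁ * W y₁) = fun y₁ => m * (k x y₁ * p y₁) - B * p y₁ :=
        funext fun y₁ => by rw [claim2 y₁]; ring
      rw [h1, integral_sub (hA.const_mul m) (hp_int.const_mul B), integral_const_mul,
        integral_const_mul, ← hA_def, ← hm_def]
      ring
    calc m * |∫ y, k x y * φ y| = |∫ y₁, p y₁ * W y₁| := by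
          rw [claim1, hiden, abs_mul, abs_of_nonneg hm_nonneg]
      _ ≤ ∫ y₁, |p y₁ * W y₁| := by
          simpa only [Real.norm_eq_abs] using
            norm_integral_le_integral_norm (fun y₁ => p y₁ * W y₁)
      _ ≤ ∫ y₁, p y₁ * G x y₁ := by
          refine integral_mono_of_nonneg
            (Filter.Eventually.of_forall fun y₁ => abs_nonneg _) hPG_int
            (Filter.Eventually.of_forall fun y₁ => ?_)
          show |p y₁ * W y₁| ≤ p y₁ * G x y₁
          rw [abs_mul, abs_of_nonneg (hp_nonneg y₁)]
          exact mul_le_mul_of_nonneg_left (hWle y₁) (hp_nonneg y₁)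
  -- Step 3 : integrate in x
  have hsm_inner : StronglyMeasurable fun x => ∫ y, k x y * φ y :=
    ((hk_meas.mul (hφ_meas.comp measurable_snd)).stronglyMeasurable).integral_prod_right'
  have hL_eq : (∫ x, |∫ y, k x y * φ y|)
      = (∫⁻ x, ENNReal.ofReal |∫ y, k x y * φ y|).toReal :=
    integral_eq_lintegral_of_nonneg_ae (Filter.Eventually.of_forall fun x => abs_nonneg _)
      (hsm_inner.measurable.abs.aestronglyMeasurable)
  have hGmeas2 : Measurable fun q : ℝ × ℝ => ∫⁻ y₂, ENNReal.ofReal (|k q.1 q.2 - k q.1 y₂| * n y₂) := by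
    apply Measurable.lintegral_prod_right
      (f := fun q : ℝ × ℝ => fun y₂ => ENNReal.ofReal (|k q.1 q.2 - k q.1 y₂| * n y₂))
    have : Measurable fun z : (ℝ × ℝ) × ℝ => |k z.1.1 z.1.2 - k z.1.1 z.2| * n z.2 := by
      have h1 : Measurable fun z : (ℝ × ℝ) × ℝ => k z.1.1 z.1.2 :=
        hk_meas.comp (measurable_fst.fst.prodMk measurable_fst.snd)
      have h2 : Measurable fun z : (ℝ × ℝ) × ℝ => k z.1.1 z.2 :=
        hk_meas.comp (measurable_fst.fst.prodMk measurable_snd)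
      exact ((h1.sub h2).abs).mul (hn_meas.comp measurable_snd)
    exact this.ennreal_ofReal
  have inner_bound : ∀ y₁, (∫⁻ y₂, ∫⁻ x, ENNReal.ofReal (|k x y₁ - k x y₂| * n y₂))
      ≤ ENNReal.ofReal D * ENNReal.ofReal m := by
    intro y₁
    have step : ∀ y₂, (∫⁻ x, ENNReal.ofReal (|k x y₁ - k x y₂| * n y₂))
        ≤ ENNReal.ofReal D * ENNReal.ofReal (n y₂) := by
      intro y₂
      calc (∫⁻ x, ENNReal.ofReal (|k x y₁ - k x y₂| * n y₂))
          = ∫⁻ x, ENNReal.ofReal |k x y₁ - k x y₂| * ENNReal.ofReal (n y₂) := by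
            refine lintegral_congr fun x => ENNReal.ofReal_mul (abs_nonneg _)
        _ = (∫⁻ x, ENNReal.ofReal |k x y₁ - k x y₂|) * ENNReal.ofReal (n y₂) :=
            lintegral_mul_const' _ _ ENNReal.ofReal_ne_top
        _ = ENNReal.ofReal (∫ x, |k x y₁ - k x y₂|) * ENNReal.ofReal (n y₂) := by
            rw [← ofReal_integral_eq_lintegral_ofReal
              (f := fun x => |k x y₁ - k x y₂|)
              (by exact ((hki y₁).sub (hki y₂)).abs)
              (Filter.Eventually.of_forall fun x => abs_nonneg _)]
        _ ≤ ENNReal.ofReal D * ENNReal.ofReal (n y₂) :=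
            mul_le_mul_left (ENNReal.ofReal_le_ofReal (hDle y₁ y₂)) _
    calc (∫⁻ y₂, ∫⁻ x, ENNReal.ofReal (|k x y₁ - k x y₂| * n y₂))
        ≤ ∫⁻ y₂, ENNReal.ofReal D * ENNReal.ofReal (n y₂) := lintegral_mono step
      _ = ENNReal.ofReal D * ∫⁻ y₂, ENNReal.ofReal (n y₂) :=
          lintegral_const_mul _ hn_meas.ennreal_ofReal
      _ = ENNReal.ofReal D * ENNReal.ofReal m := by
          rw [← ofReal_integral_eq_lintegral_ofReal hn_int
            (Filter.Eventually.of_forall hn_nonneg), hmn]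
  have key2 : ENNReal.ofReal m * (∫⁻ x, ENNReal.ofReal |∫ y, k x y * φ y|)
      ≤ ENNReal.ofReal m * (ENNReal.ofReal D * ENNReal.ofReal m) := by
    calc ENNReal.ofReal m * (∫⁻ x, ENNReal.ofReal |∫ y, k x y * φ y|)
        = ∫⁻ x, ENNReal.ofReal m * ENNReal.ofReal |∫ y, k x y * φ y| :=
          (lintegral_const_mul _ hsm_inner.measurable.abs.ennreal_ofReal).symm
      _ = ∫⁻ x, ENNReal.ofReal (m * |∫ y, k x y * φ y|) := by
          refine lintegral_congr fun x => (ENNReal.ofReal_mul hm_nonneg).symm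
      _ ≤ ∫⁻ x, ENNReal.ofReal (∫ y₁, p y₁ * G x y₁) :=
          lintegral_mono_ae (hmain.mono fun x hx => ENNReal.ofReal_le_ofReal hx)
      _ ≤ ∫⁻ x, ∫⁻ y₁, ENNReal.ofReal (p y₁ * G x y₁) := by
          refine lintegral_mono fun x => ofReal_integral_le_aux
            (fun y₁ => mul_nonneg (hp_nonneg y₁) (hG_nonneg x y₁))
            ((hp_meas.mul (hGsm x).measurable).aestronglyMeasurable)
      _ = ∫⁻ x, ∫⁻ y₁, ENNReal.ofReal (p y₁) * ENNReal.ofReal (G x y₁) := by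
          refine lintegral_congr fun x => lintegral_congr fun y₁ =>
            ENNReal.ofReal_mul (hp_nonneg y₁)
      _ ≤ ∫⁻ x, ∫⁻ y₁, ENNReal.ofReal (p y₁) *
            ∫⁻ y₂, ENNReal.ofReal (|k x y₁ - k x y₂| * n y₂) := by
          refine lintegral_mono fun x => lintegral_mono fun y₁ => mul_le_mul_right ?_ _
          refine ofReal_integral_le_aux
            (fun y₂ => mul_nonneg (abs_nonneg _) (hn_nonneg y₂)) ?_
          have : Measurable fun y₂ => |k x y₁ - k x y₂| * n y₂ :=
            ((measurable_const.sub hk_meas.of_uncurry_left).abs).mul hn_meas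
          exact this.aestronglyMeasurable
      _ = ∫⁻ y₁, ∫⁻ x, ENNReal.ofReal (p y₁) *
            ∫⁻ y₂, ENNReal.ofReal (|k x y₁ - k x y₂| * n y₂) := by
          refine lintegral_lintegral_swap ?_
          refine Measurable.aemeasurable ?_
          have h1 : Measurable fun q : ℝ × ℝ =>
              ∫⁻ y₂, ENNReal.ofReal (|k q.1 q.2 - k q.1 y₂| * n y₂) := hGmeas2
          exact ((hp_meas.comp measurable_snd).ennreal_ofReal).mul h1
      _ = ∫⁻ y₁, ENNReal.ofReal (p y₁) * ∫⁻ x,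
            ∫⁻ y₂, ENNReal.ofReal (|k x y₁ - k x y₂| * n y₂) := by
          refine lintegral_congr fun y₁ => ?_
          refine lintegral_const_mul _ ?_
          apply Measurable.lintegral_prod_right
            (f := fun x y₂ => ENNReal.ofReal (|k x y₁ - k x y₂| * n y₂))
          have h1 : Measurable fun z : ℝ × ℝ => k z.1 y₁ :=
            hk_meas.comp (measurable_fst.prodMk measurable_const)
          have h2 : Measurable fun z : ℝ × ℝ => k z.1 z.2 := hk_meas
          exact (((h1.sub h2).abs).mul (hn_meas.comp measurable_snd)).ennreal_ofReal
      _ = ∫⁻ y₁, ENNReal.ofReal (p y₁) * ∫⁻ y₂,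
            ∫⁻ x, ENNReal.ofReal (|k x y₁ - k x y₂| * n y₂) := by
          refine lintegral_congr fun y₁ => ?_
          congr 1
          refine lintegral_lintegral_swap ?_
          refine Measurable.aemeasurable ?_
          have h1 : Measurable fun z : ℝ × ℝ => k z.1 y₁ :=
            hk_meas.comp (measurable_fst.prodMk measurable_const)
          exact ((((h1.sub hk_meas).abs).mul (hn_meas.comp measurable_snd)).ennreal_ofReal)
      _ ≤ ∫⁻ y₁, ENNReal.ofReal (p y₁) * (ENNReal.ofReal D * ENNReal.ofReal m) :=
          lintegral_mono fun y₁ => mul_le_mul_right (inner_bound y₁) _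
      _ = (∫⁻ y₁, ENNReal.ofReal (p y₁)) * (ENNReal.ofReal D * ENNReal.ofReal m) :=
          lintegral_mul_const' _ _ (by finiteness)
      _ = ENNReal.ofReal m * (ENNReal.ofReal D * ENNReal.ofReal m) := by
          rw [← ofReal_integral_eq_lintegral_ofReal hp_int
            (Filter.Eventually.of_forall hp_nonneg)]
  have hL_le : (∫⁻ x, ENNReal.ofReal |∫ y, k x y * φ y|)
      ≤ ENNReal.ofReal D * ENNReal.ofReal m := by
    refine (ENNReal.mul_le_mul_iff_right ?_ ENNReal.ofReal_ne_top).mp key2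
    exact (ENNReal.ofReal_pos.mpr hm).ne'
  rw [hL_eq, habs_int]
  calc (∫⁻ x, ENNReal.ofReal |∫ y, k x y * φ y|).toReal
      ≤ (ENNReal.ofReal D * ENNReal.ofReal m).toReal :=
        ENNReal.toReal_mono (by finiteness) hL_le
    _ = D * m := by
        rw [← ENNReal.ofReal_mul hD0, ENNReal.toReal_ofReal (mul_nonneg hD0 hm_nonneg)]
    _ = 1 / 2 * D * (2 * m) := by ring

/-- Dobrushin-type contraction of a Markov transition density acting on a
signed density with zero total mass (key step in the proof of Lemma 6.1
of Grama–Neumann). -/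
theorem kernel_contraction
    (k : ℝ → ℝ → ℝ) (hk_meas : Measurable (Function.uncurry k))
    (hk_nonneg : ∀ x y, 0 ≤ k x y) (hk_int : ∀ y, ∫ x, k x y = 1)
    (φ : ℝ → ℝ) (hφ_int : Integrable φ) (hφ_zero : ∫ y, φ y = 0) :
    ∫ x, |∫ y, k x y * φ y|
      ≤ (1 / 2) * sSup (Set.range fun q : ℝ × ℝ => ∫ x, |k x q.1 - k x q.2|) *
          ∫ y, |φ y| := by
  obtain ⟨ψ, hψsm, hψae⟩ := hφ_int.aestronglyMeasurable
  have hψm : Measurable ψ := hψsm.measurable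
  have h1 : ∀ x, (∫ y, k x y * φ y) = ∫ y, k x y * ψ y := fun x =>
    integral_congr_ae (hψae.mono fun y hy => by simp only [hy])
  have h2 : (∫ y, |φ y|) = ∫ y, |ψ y| :=
    integral_congr_ae (hψae.mono fun y hy => by simp only [hy])
  simp only [h1, h2]
  exact kernel_contraction_aux k hk_meas hk_nonneg hk_int ψ hψm
    (hφ_int.congr hψae) (by rw [← integral_congr_ae hψae, hφ_zero])
end

section
/- Let ξ and η be random variables with values in ℝ and ℝ^d respectively, whose joint law has a density p_{ξ,η} with respect to Lebesgue measure on ℝ^{1+d}. Let p_ξ(x) = ∫ p_{ξ,η}(x, y) dy and p_η(y) = ∫ p_{ξ,η}(x, y) dx denote the marginal densities, and for y with p_η(y) > 0 let p_{ξ|η}(x|y) = p_{ξ,η}(x, y)/p_η(y) denote the conditional density. Then for almost every y with respect to the law of η, (1/2) ∫ | p_ξ(x) − p_{ξ|η}(x|y) | dx ≤ φ(ξ, η). -/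
/-!
Fix a Borel set `A`. For every Borel `B`, the mixing inequality
`P(ξ ∈ A) P(η ∈ B) - P(ξ ∈ A, η ∈ B) ≤ φ P(η ∈ B)`, written through the density, compares the
integrals over `B` of `y ↦ P(ξ ∈ A) p_η(y) - ∫_A p(x, y) dx` and `y ↦ φ p_η(y)`; since `B` is
arbitrary, the integrands compare for a.e. `y`, i.e. `∫_A (p_ξ - p_{ξ|η}(· | y)) ≤ φ`.
The exceptional null set depends on `A`, so this is done at once only for `A` in a countable
algebra generating the Borel sets. Such an algebra is dense in `L¹(|f|)` for every integrable `f`,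
so the bound extends to all `A`, in particular to `A = {p_ξ ≥ p_{ξ|η}(· | y)}`, on which the
integral is half the `L¹` distance because both densities have mass one.
-/

open MeasureTheory Real

/-- The uniform φ-mixing coefficient between two random variables `ξ` and `η`:
`φ(ξ, η) = sup {|P(A) - P(A ∩ B)/P(B)| : A ∈ σ(ξ), B ∈ σ(η), P(B) ≠ 0}`. -/
noncomputable def phiCoef {Ω : Type*} [MeasurableSpace Ω] (P : Measure Ω)
    {E F : Type*} [MeasurableSpace E] [MeasurableSpace F] (ξ : Ω → E) (η : Ω → F) : ℝ :=
  sSup {r : ℝ | ∃ A B : Set Ω,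
    MeasurableSet[MeasurableSpace.comap ξ inferInstance] A ∧
    MeasurableSet[MeasurableSpace.comap η inferInstance] B ∧ P B ≠ 0 ∧
    r = |(P A).toReal - (P (A ∩ B)).toReal / (P B).toReal|}

open MeasurableSpace Set
open scoped symmDiff ENNReal

namespace MeasureTheory

section CountableAlgebra

variable {α : Type*} [MeasurableSpace α] [CountablyGenerated α]

variable (α) in
def countableGeneratingAlgebra : Set (Set α) :=
  generateSetAlgebra (countableGeneratingSet α)

lemma countable_countableGeneratingAlgebra : (countableGeneratingAlgebra α).Countable :=
  countable_generateSetAlgebra countable_countableGeneratingSet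

lemma generateFrom_countableGeneratingAlgebra :
    generateFrom (countableGeneratingAlgebra α) = ‹MeasurableSpace α› := by
  rw [countableGeneratingAlgebra, generateFrom_generateSetAlgebra_eq,
    generateFrom_countableGeneratingSet]

lemma measurableSet_of_mem_countableGeneratingAlgebra {s : Set α}
    (hs : s ∈ countableGeneratingAlgebra α) : MeasurableSet s :=
  generateFrom_countableGeneratingAlgebra (α := α) ▸ measurableSet_generateFrom hs

lemma exists_mem_countableGeneratingAlgebra_measure_symmDiff_lt (μ : Measure α)
    [IsFiniteMeasure μ] {s : Set α} (hs : MeasurableSet s) {ε : ℝ≥0∞} (hε : 0 < ε) :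
    ∃ t ∈ countableGeneratingAlgebra α, μ (t ∆ s) < ε :=
  exists_measure_symmDiff_lt_of_generateFrom_isSetRing isSetAlgebra_generateSetAlgebra.isSetRing
    ⟨{univ}, countable_singleton _, by simpa using isSetAlgebra_generateSetAlgebra.univ_mem,
      by simp⟩ generateFrom_countableGeneratingAlgebra.symm hs hε

end CountableAlgebra

lemma setIntegral_sub_setIntegral_le_setIntegral_symmDiff_abs {α : Type*} [MeasurableSpace α]
    {μ : Measure α} {f : α → ℝ} (hf : Integrable f μ) {s t : Set α} (hs : MeasurableSet s)
    (ht : MeasurableSet t) :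
    ∫ x in s, f x ∂μ - ∫ x in t, f x ∂μ ≤ ∫ x in s ∆ t, |f x| ∂μ := by
  have hs_split := integral_inter_add_sdiff ht (hf.integrableOn (s := s))
  have ht_split := integral_inter_add_sdiff hs (hf.integrableOn (s := t))
  have h_symm : ∫ x in s ∆ t, |f x| ∂μ = ∫ x in s \ t, |f x| ∂μ + ∫ x in t \ s, |f x| ∂μ :=
    setIntegral_union disjoint_sdiff_sdiff (ht.diff hs) hf.abs.integrableOn hf.abs.integrableOn
  rw [inter_comm] at ht_split
  have h₁ : ∫ x in s \ t, f x ∂μ ≤ ∫ x in s \ t, |f x| ∂μ :=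
    setIntegral_mono hf.integrableOn hf.abs.integrableOn fun x ↦ le_abs_self _
  have h₂ : -∫ x in t \ s, f x ∂μ ≤ ∫ x in t \ s, |f x| ∂μ := by
    rw [← integral_neg]
    exact setIntegral_mono hf.neg.integrableOn hf.abs.integrableOn fun x ↦ neg_le_abs _
  linarith

lemma setIntegral_le_of_forall_mem_countableGeneratingAlgebra {α : Type*} [MeasurableSpace α]
    [CountablyGenerated α] {μ : Measure α} {f : α → ℝ} (hf : Integrable f μ) {c : ℝ}
    (h : ∀ t ∈ countableGeneratingAlgebra α, ∫ x in t, f x ∂μ ≤ c) {s : Set α}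
    (hs : MeasurableSet s) : ∫ x in s, f x ∂μ ≤ c := by
  have := isFiniteMeasure_withDensity_ofReal hf.abs.hasFiniteIntegral
  refine le_of_forall_pos_lt_add fun ε hε ↦ ?_
  obtain ⟨t, ht, hts⟩ := exists_mem_countableGeneratingAlgebra_measure_symmDiff_lt
    (μ.withDensity fun x ↦ ENNReal.ofReal |f x|) hs (ENNReal.ofReal_pos.2 hε)
  have ht_meas := measurableSet_of_mem_countableGeneratingAlgebra ht
  rw [withDensity_apply _ (ht_meas.symmDiff hs), symmDiff_comm,
    ← ofReal_integral_eq_lintegral_ofReal hf.abs.integrableOn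
      (Filter.Eventually.of_forall fun _ ↦ abs_nonneg _),
    ENNReal.ofReal_lt_ofReal_iff hε] at hts
  linarith [h t ht, setIntegral_sub_setIntegral_le_setIntegral_symmDiff_abs hf hs ht_meas]

lemma integral_posPart_le_of_forall_setIntegral_le {α : Type*} [MeasurableSpace α]
    {μ : Measure α} {f : α → ℝ} (hf : Integrable f μ) {c : ℝ}
    (h : ∀ s, MeasurableSet s → ∫ x in s, f x ∂μ ≤ c) : ∫ x, (f x)⁺ ∂μ ≤ c := by
  set g := hf.1.mk f
  have hs : MeasurableSet {x | 0 ≤ g x} :=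
    measurableSet_le measurable_const hf.1.stronglyMeasurable_mk.measurable
  calc ∫ x, (f x)⁺ ∂μ = ∫ x, (g x)⁺ ∂μ :=
        integral_congr_ae (hf.1.ae_eq_mk.fun_comp _)
    _ = ∫ x in {x | 0 ≤ g x}, (g x)⁺ ∂μ :=
        (setIntegral_eq_integral_of_forall_compl_eq_zero (s := {x | 0 ≤ g x}) fun x hx ↦
          posPart_eq_zero.2 (not_le.1 hx).le).symm
    _ = ∫ x in {x | 0 ≤ g x}, f x ∂μ := setIntegral_congr_ae hs
        (hf.1.ae_eq_mk.mono fun x hx hx_mem ↦ by rw [hx, posPart_eq_self.2 hx_mem])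
    _ ≤ c := h _ hs

end MeasureTheory

section PhiCoef

variable {Ω E F : Type*} [MeasurableSpace Ω] [MeasurableSpace E] [MeasurableSpace F]
  {P : Measure Ω} [IsFiniteMeasure P] {ξ : Ω → E} {η : Ω → F} {A B : Set Ω}

lemma abs_measureReal_sub_div_le_phiCoef
    (hA : MeasurableSet[MeasurableSpace.comap ξ inferInstance] A)
    (hB : MeasurableSet[MeasurableSpace.comap η inferInstance] B) (hPB : P B ≠ 0) :
    |P.real A - P.real (A ∩ B) / P.real B| ≤ phiCoef P ξ η := by
  refine le_csSup ⟨P.real univ + 1, ?_⟩ ⟨A, B, hA, hB, hPB, rfl⟩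
  rintro _ ⟨A', B', -, -, -, rfl⟩
  have h_ratio : (P (A' ∩ B')).toReal / (P B').toReal ≤ 1 :=
    div_le_one_of_le₀ (measureReal_mono inter_subset_right) measureReal_nonneg
  have h_ratio_nonneg : 0 ≤ (P (A' ∩ B')).toReal / (P B').toReal := by positivity
  have hPA' : (P A').toReal ≤ P.real univ := measureReal_mono (subset_univ A')
  rw [abs_le]
  constructor <;> linarith [ENNReal.toReal_nonneg (a := P A')]

lemma measureReal_mul_sub_measureReal_inter_le_phiCoef_mul
    (hA : MeasurableSet[MeasurableSpace.comap ξ inferInstance] A)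
    (hB : MeasurableSet[MeasurableSpace.comap η inferInstance] B) :
    P.real A * P.real B - P.real (A ∩ B) ≤ phiCoef P ξ η * P.real B := by
  rcases eq_or_ne (P B) 0 with hPB | hPB
  · simp [Measure.real, hPB, measure_mono_null inter_subset_right hPB]
  have hPB_pos : 0 < P.real B := ENNReal.toReal_pos hPB (measure_ne_top P B)
  calc P.real A * P.real B - P.real (A ∩ B)
      = (P.real A - P.real (A ∩ B) / P.real B) * P.real B := by field_simp
    _ ≤ phiCoef P ξ η * P.real B := by
      gcongr
      exact (le_abs_self _).trans (abs_measureReal_sub_div_le_phiCoef hA hB hPB)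

end PhiCoef

structure IsJointDensity {Ω α β : Type*} [MeasurableSpace Ω] [MeasurableSpace α]
    [MeasurableSpace β] (P : Measure Ω) (ξ : Ω → α) (η : Ω → β) (μ : Measure α) (ν : Measure β)
    (p : α × β → ℝ) : Prop where
  measurable : Measurable p
  nonneg : ∀ z, 0 ≤ p z
  map_eq : P.map (fun ω ↦ (ξ ω, η ω)) = (μ.prod ν).withDensity fun z ↦ ENNReal.ofReal (p z)

namespace IsJointDensity

variable {Ω α β : Type*} [MeasurableSpace Ω] [MeasurableSpace α] [MeasurableSpace β]
  {P : Measure Ω} {μ : Measure α} {ν : Measure β} {ξ : Ω → α} {η : Ω → β} {p : α × β → ℝ}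
  {A : Set α} {B : Set β}

lemma absolutelyContinuous_map_right [SFinite ν] (hp : IsJointDensity P ξ η μ ν p)
    (hξ : Measurable ξ) (hη : Measurable η) : P.map η ≪ ν := by
  refine Measure.AbsolutelyContinuous.mk fun B hB hνB ↦ ?_
  have h_preimage : η ⁻¹' B = (fun ω ↦ (ξ ω, η ω)) ⁻¹' (univ ×ˢ B) := by
    rw [mk_preimage_prod, preimage_univ, univ_inter]
  rw [Measure.map_apply hη hB, h_preimage,
    ← Measure.map_apply (hξ.prodMk hη) (MeasurableSet.univ.prod hB), hp.map_eq]
  exact withDensity_absolutelyContinuous _ _ (by rw [Measure.prod_prod, hνB, mul_zero])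

lemma integrable [IsFiniteMeasure P] (hp : IsJointDensity P ξ η μ ν p) :
    Integrable p (μ.prod ν) := by
  refine ⟨hp.measurable.aestronglyMeasurable,
    (hasFiniteIntegral_iff_ofReal (ae_of_all _ hp.nonneg)).2 ?_⟩
  rw [← setLIntegral_univ, ← withDensity_apply _ MeasurableSet.univ, ← hp.map_eq]
  exact measure_lt_top _ _

lemma measureReal_preimage_inter_preimage (hp : IsJointDensity P ξ η μ ν p)
    (hξ : Measurable ξ) (hη : Measurable η) (hA : MeasurableSet A) (hB : MeasurableSet B) :
    P.real (ξ ⁻¹' A ∩ η ⁻¹' B) = ∫ z in A ×ˢ B, p z ∂(μ.prod ν) := by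
  rw [Measure.real, ← mk_preimage_prod, ← Measure.map_apply (hξ.prodMk hη) (hA.prod hB),
    hp.map_eq, withDensity_apply _ (hA.prod hB), integral_eq_lintegral_of_nonneg_ae
      (ae_of_all _ hp.nonneg) hp.measurable.aestronglyMeasurable]

lemma measureReal_preimage_inter_preimage_eq_setIntegral_setIntegral [SFinite μ] [SFinite ν]
    [IsFiniteMeasure P] (hp : IsJointDensity P ξ η μ ν p) (hξ : Measurable ξ) (hη : Measurable η)
    (hA : MeasurableSet A) (hB : MeasurableSet B) :
    P.real (ξ ⁻¹' A ∩ η ⁻¹' B) = ∫ y in B, ∫ x in A, p (x, y) ∂μ ∂ν := by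
  have h_int : Integrable p ((μ.restrict A).prod (ν.restrict B)) := by
    rw [Measure.prod_restrict]
    exact hp.integrable.restrict
  rw [hp.measureReal_preimage_inter_preimage hξ hη hA hB, ← Measure.prod_restrict,
    integral_prod_symm _ h_int]

lemma measureReal_preimage [SFinite μ] [SFinite ν] [IsFiniteMeasure P]
    (hp : IsJointDensity P ξ η μ ν p) (hξ : Measurable ξ) (hη : Measurable η)
    (hA : MeasurableSet A) :
    P.real (ξ ⁻¹' A) = ∫ x in A, ∫ y, p (x, y) ∂ν ∂μ := by
  have h := hp.measureReal_preimage_inter_preimage hξ hη hA MeasurableSet.univ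
  rwa [preimage_univ, inter_univ, setIntegral_prod _ hp.integrable.integrableOn,
    Measure.restrict_univ] at h

lemma ae_measureReal_preimage_sub_div_le_phiCoef [SFinite μ] [SFinite ν] [IsFiniteMeasure P]
    (hp : IsJointDensity P ξ η μ ν p) (hξ : Measurable ξ) (hη : Measurable η)
    (hA : MeasurableSet A) :
    ∀ᵐ y ∂ν, 0 < ∫ x, p (x, y) ∂μ →
      P.real (ξ ⁻¹' A) - (∫ x in A, p (x, y) ∂μ) / ∫ x, p (x, y) ∂μ ≤ phiCoef P ξ η := by
  have h_marg : Integrable (fun y ↦ ∫ x, p (x, y) ∂μ) ν := hp.integrable.integral_prod_right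
  have h_margA : Integrable (fun y ↦ ∫ x in A, p (x, y) ∂μ) ν := by
    have : Integrable p ((μ.restrict A).prod ν) := by
      rw [← Measure.restrict_univ (μ := ν), Measure.prod_restrict]
      exact hp.integrable.restrict
    exact this.integral_prod_right
  have h_le : ∀ᵐ y ∂ν, P.real (ξ ⁻¹' A) * ∫ x, p (x, y) ∂μ - ∫ x in A, p (x, y) ∂μ ≤
      phiCoef P ξ η * ∫ x, p (x, y) ∂μ := by
    refine ae_le_of_forall_setIntegral_le ((h_marg.const_mul _).sub h_margA)
      (h_marg.const_mul _) fun B hB _ ↦ ?_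
    have h_B := hp.measureReal_preimage_inter_preimage_eq_setIntegral_setIntegral hξ hη
      MeasurableSet.univ hB
    rw [preimage_univ, univ_inter, Measure.restrict_univ] at h_B
    rw [integral_sub (h_marg.const_mul _).integrableOn h_margA.integrableOn, integral_const_mul,
      integral_const_mul, ← h_B,
      ← hp.measureReal_preimage_inter_preimage_eq_setIntegral_setIntegral hξ hη hA hB]
    exact measureReal_mul_sub_measureReal_inter_le_phiCoef_mul ⟨A, hA, rfl⟩ ⟨B, hB, rfl⟩
  filter_upwards [h_le] with y hy hy_pos
  refine le_of_mul_le_mul_right ?_ hy_pos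
  rwa [sub_mul, div_mul_cancel₀ _ hy_pos.ne']

theorem ae_half_integral_abs_sub_le_phiCoef [CountablyGenerated α] [SFinite μ] [SFinite ν]
    [IsProbabilityMeasure P] (hp : IsJointDensity P ξ η μ ν p) (hξ : Measurable ξ)
    (hη : Measurable η) :
    ∀ᵐ y ∂(P.map η), 0 < ∫ x, p (x, y) ∂μ →
      (1 / 2) * ∫ x, |(∫ y', p (x, y') ∂ν) - p (x, y) / ∫ x', p (x', y) ∂μ| ∂μ
        ≤ phiCoef P ξ η := by
  have h_alg : ∀ᵐ y ∂ν, ∀ A ∈ countableGeneratingAlgebra α, 0 < ∫ x, p (x, y) ∂μ →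
      P.real (ξ ⁻¹' A) - (∫ x in A, p (x, y) ∂μ) / ∫ x, p (x, y) ∂μ ≤ phiCoef P ξ η :=
    (ae_ball_iff countable_countableGeneratingAlgebra).2 fun A hA ↦
      hp.ae_measureReal_preimage_sub_div_le_phiCoef hξ hη
        (measurableSet_of_mem_countableGeneratingAlgebra hA)
  filter_upwards [(hp.absolutelyContinuous_map_right hξ hη).ae_le h_alg] with y hy hy_pos
  set c := ∫ x, p (x, y) ∂μ with hc
  set g : α → ℝ := fun x ↦ (∫ y', p (x, y') ∂ν) - p (x, y) / c
  have hp_y : Integrable (fun x ↦ p (x, y)) μ := Integrable.of_integral_ne_zero hy_pos.ne'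
  have hg : Integrable g μ := hp.integrable.integral_prod_left.sub (hp_y.div_const c)
  have hg_set (A : Set α) (hA : MeasurableSet A) :
      ∫ x in A, g x ∂μ = P.real (ξ ⁻¹' A) - (∫ x in A, p (x, y) ∂μ) / c := by
    rw [integral_sub hp.integrable.integral_prod_left.integrableOn
      (hp_y.div_const c).integrableOn, integral_div, hp.measureReal_preimage hξ hη hA]
  have hg_zero : ∫ x, g x ∂μ = 0 := by
    rw [← setIntegral_univ, hg_set univ MeasurableSet.univ, Measure.restrict_univ, ← hc,
      div_self hy_pos.ne', preimage_univ, probReal_univ, sub_self]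
  have hg_posPart : ∫ x, (g x)⁺ ∂μ ≤ phiCoef P ξ η :=
    integral_posPart_le_of_forall_setIntegral_le hg fun s hs ↦
      setIntegral_le_of_forall_mem_countableGeneratingAlgebra hg (fun t ht ↦
        (hg_set t (measurableSet_of_mem_countableGeneratingAlgebra ht)).trans_le
          (hy t ht hy_pos)) hs
  rw [integral_abs_eq_two_mul_integral_posPart_sub_integral hg, hg_zero]
  linarith

end IsJointDensity

/-- The total variation distance between the conditional law of `ξ` given `η = y`
and the marginal law of `ξ` is bounded by the uniform φ-mixing coefficient
`φ(ξ, η)`, for almost every `y` with respect to the law of `η`. -/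
theorem tv_conditional_le_phiCoef
    {Ω : Type*} [mΩ : MeasurableSpace Ω] (P : Measure Ω) [IsProbabilityMeasure P]
    (d : ℕ) (ξ : Ω → ℝ) (η : Ω → (Fin d → ℝ))
    (hξ : Measurable ξ) (hη : Measurable η)
    (pj : ℝ × (Fin d → ℝ) → ℝ) (hpj_meas : Measurable pj) (hpj_nonneg : ∀ z, 0 ≤ pj z)
    (h_density : P.map (fun ω => (ξ ω, η ω)) =
      (volume : Measure (ℝ × (Fin d → ℝ))).withDensity fun z => ENNReal.ofReal (pj z)) :
    ∀ᵐ y ∂(P.map η),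
      0 < (∫ x, pj (x, y)) →
        (1 / 2) * ∫ x, |(∫ y', pj (x, y')) - pj (x, y) / (∫ x', pj (x', y))|
          ≤ phiCoef P ξ η := by
  rw [Measure.volume_eq_prod] at h_density
  exact IsJointDensity.ae_half_integral_abs_sub_le_phiCoef ⟨hpj_meas, hpj_nonneg, h_density⟩ hξ hη
end

section
/- Let (F_i)_{i=0,…,m} be a filtration on a probability space, and let d_1, …, d_m be random variables such that each d_i is F_i-measurable, E(d_i | F_{i−1}) = 0 almost surely, |d_i| ≤ a almost surely for some constant a > 0, and E(d_i² | F_{i−1}) ≤ σ_i² almost surely for constants σ_1, …, σ_m ≥ 0. Then for every real λ with |λ| ≤ 1, E exp( λ ∑_{i=1}^m d_i ) ≤ exp( c λ² ∑_{i=1}^m σ_i² ), where c = e^a / 2. -/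
open MeasureTheory Real

/-! For `x ≤ a` with `0 ≤ a`, Taylor's theorem gives `exp x ≤ 1 + x + (eᵃ / 2) x²`. Taking
`x = λ dᵢ` and conditioning on `F (i - 1)`, the linear term vanishes and the quadratic one is at
most `(eᵃ / 2) λ² σᵢ²`, so `E[exp (λ dᵢ) | F (i - 1)] ≤ 1 + (eᵃ / 2) λ² σᵢ² ≤ exp ((eᵃ / 2) λ² σᵢ²)`.
Since `exp (λ (d₁ + ⋯ + dᵢ₋₁))` is `F (i - 1)`-measurable, the tower property peels off these
factors one at a time. -/

lemma mul_le_of_abs_le_one_of_abs_le {α : Type*} [Ring α] [LinearOrder α] [IsStrictOrderedRing α]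
    {lam x a : α} (hlam : |lam| ≤ 1) (hx : |x| ≤ a) : lam * x ≤ a :=
  (le_abs_self _).trans <| (abs_mul lam x).trans_le <|
    (mul_le_of_le_one_left (abs_nonneg x) hlam).trans hx

namespace Real

lemma exp_le_one_add_add_sq_div_two {x : ℝ} (hx : x ≤ 0) : exp x ≤ 1 + x + x ^ 2 / 2 := by
  have hanti : Antitone fun y : ℝ => 1 + y + y ^ 2 / 2 - exp y := by
    refine antitone_of_hasDerivAt_nonpos (f' := fun y => 1 + y - exp y) (fun y => ?_)
      (fun y => sub_nonpos.2 (by linarith [add_one_le_exp y]))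
    refine ((((hasDerivAt_id y).const_add 1).add ((hasDerivAt_pow 2 y).div_const 2)).sub
      (hasDerivAt_exp y)).congr_deriv ?_
    push_cast
    ring
  simpa using hanti hx

lemma exp_le_one_add_add_sq_div_two_mul_exp {x : ℝ} (hx : 0 ≤ x) :
    exp x ≤ 1 + x + x ^ 2 / 2 * exp x := by
  have hmono : Monotone fun y : ℝ => y ^ 2 / 2 + (1 + y) * exp (-y) := by
    refine monotone_of_hasDerivAt_nonneg (f' := fun y => y * (1 - exp (-y))) (fun y => ?_)
      (fun y => ?_)
    · refine (((hasDerivAt_pow 2 y).div_const 2).add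
        (((hasDerivAt_id y).const_add 1).mul (hasDerivAt_neg y).exp)).congr_deriv ?_
      simp only [id]
      push_cast
      ring
    · rcases le_total 0 y with hy | hy
      · exact mul_nonneg hy (sub_nonneg.2 (exp_le_one_iff.2 (by linarith)))
      · exact mul_nonneg_of_nonpos_of_nonpos hy (sub_nonpos.2 (one_le_exp (by linarith)))
  have h : 1 ≤ x ^ 2 / 2 + (1 + x) * exp (-x) := by simpa using hmono hx
  calc exp x = 1 * exp x := (one_mul _).symm
    _ ≤ (x ^ 2 / 2 + (1 + x) * exp (-x)) * exp x := by gcongr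
    _ = 1 + x + x ^ 2 / 2 * exp x := by
      rw [add_mul, mul_assoc, ← exp_add, neg_add_cancel, exp_zero]; ring

lemma exp_le_one_add_add_exp_div_two_mul_sq {a x : ℝ} (ha : 0 ≤ a) (hx : x ≤ a) :
    exp x ≤ 1 + x + exp a / 2 * x ^ 2 := by
  rcases le_total x 0 with hx0 | hx0
  · calc exp x ≤ 1 + x + 1 / 2 * x ^ 2 := by linarith [exp_le_one_add_add_sq_div_two hx0]
      _ ≤ 1 + x + exp a / 2 * x ^ 2 := by gcongr; exact one_le_exp ha
  · calc exp x ≤ 1 + x + x ^ 2 / 2 * exp x := exp_le_one_add_add_sq_div_two_mul_exp hx0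
      _ ≤ 1 + x + exp a / 2 * x ^ 2 := by
        have := exp_le_exp.2 hx
        nlinarith [sq_nonneg x]

end Real

section CondExp

variable {Ω : Type*} {G : MeasurableSpace Ω} [m0 : MeasurableSpace Ω] {P : Measure Ω}
  [IsFiniteMeasure P]

lemma condExp_exp_mul_le {d : Ω → ℝ} {a s lam : ℝ} (hG : G ≤ m0) (ha : 0 ≤ a)
    (hd : AEStronglyMeasurable d P) (hd_ce : P[d | G] =ᵐ[P] fun _ => 0)
    (hd_bdd : ∀ᵐ ω ∂P, |d ω| ≤ a) (hd_var : P[fun ω => d ω ^ 2 | G] ≤ᵐ[P] fun _ => s)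
    (hlam : |lam| ≤ 1) :
    P[fun ω => exp (lam * d ω) | G] ≤ᵐ[P] fun _ => exp (exp a / 2 * lam ^ 2 * s) := by
  set c := exp a / 2
  set d2 : Ω → ℝ := fun ω => d ω ^ 2
  have hd_int : Integrable d P := .of_bound hd a (by simpa using hd_bdd)
  have hd2_int : Integrable d2 P := .of_bound (hd.pow 2) (a ^ 2) <| by
    filter_upwards [hd_bdd] with ω hω
    simpa [d2] using pow_le_pow_left₀ (abs_nonneg _) hω 2
  have hquad : (fun ω => exp (lam * d ω)) ≤ᵐ[P] (fun _ => 1) + lam • d + (c * lam ^ 2) • d2 := by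
    filter_upwards [hd_bdd] with ω hω
    calc exp (lam * d ω) ≤ 1 + lam * d ω + c * (lam * d ω) ^ 2 :=
          exp_le_one_add_add_exp_div_two_mul_sq ha (mul_le_of_abs_le_one_of_abs_le hlam hω)
      _ = _ := by simp only [d2, Pi.add_apply, Pi.smul_apply, smul_eq_mul]; ring
  have hlin : P[(fun _ => 1) + lam • d + (c * lam ^ 2) • d2 | G]
      =ᵐ[P] (fun _ => 1) + lam • P[d | G] + (c * lam ^ 2) • P[d2 | G] := by
    refine (condExp_add ((integrable_const 1).add (hd_int.smul lam)) (hd2_int.smul _) G).trans ?_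
    refine .add ((condExp_add (integrable_const 1) (hd_int.smul lam) G).trans ?_)
      (condExp_smul _ _ G)
    rw [condExp_const hG]
    exact Filter.EventuallyEq.rfl.add (condExp_smul _ _ G)
  have hexp_int : Integrable (fun ω => exp (lam * d ω)) P :=
    ProbabilityTheory.integrable_exp_mul_of_mem_Icc hd.aemeasurable
      (by filter_upwards [hd_bdd] with ω hω using abs_le.1 hω)
  have hquad_int : Integrable ((fun _ => 1) + lam • d + (c * lam ^ 2) • d2) P :=
    ((integrable_const 1).add (hd_int.smul lam)).add (hd2_int.smul _)
  filter_upwards [condExp_mono (m := G) hexp_int hquad_int hquad, hlin, hd_ce, hd_var]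
    with ω h_mono h_lin h_ce h_var
  calc P[fun ω => exp (lam * d ω) | G] ω
      ≤ 1 + lam * P[d | G] ω + c * lam ^ 2 * P[d2 | G] ω := by simpa [h_lin] using h_mono
    _ ≤ 1 + c * lam ^ 2 * s := by rw [h_ce]; gcongr; simp
    _ ≤ exp (c * lam ^ 2 * s) := by linarith [add_one_le_exp (c * lam ^ 2 * s)]

lemma integrable_exp_mul_sum {ι : Type*} (s : Finset ι) {f : ι → Ω → ℝ} {a lam : ℝ}
    (hf : ∀ i ∈ s, AEStronglyMeasurable (f i) P) (hf_bdd : ∀ i ∈ s, ∀ᵐ ω ∂P, |f i ω| ≤ a) :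
    Integrable (fun ω => exp (lam * ∑ i ∈ s, f i ω)) P := by
  refine ProbabilityTheory.integrable_exp_mul_of_mem_Icc (a := -(s.card * a)) (b := s.card * a)
    (s.aestronglyMeasurable_fun_sum hf).aemeasurable ?_
  filter_upwards [(Filter.eventually_all_finset s).2 hf_bdd] with ω hω
  refine abs_le.1 ((Finset.abs_sum_le_sum_abs _ _).trans ?_)
  simpa using Finset.sum_le_card_nsmul s _ a hω

lemma integral_mul_le_of_condExp_le_s13 {X Y : Ω → ℝ} {K : ℝ} (hG : G ≤ m0)
    (hX : StronglyMeasurable[G] X) (hX_nonneg : ∀ ω, 0 ≤ X ω) (hX_int : Integrable X P)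
    (hY_int : Integrable Y P) (hXY_int : Integrable (X * Y) P) (hYK : P[Y | G] ≤ᵐ[P] fun _ => K) :
    ∫ ω, X ω * Y ω ∂P ≤ (∫ ω, X ω ∂P) * K := by
  have hpull : P[X * Y | G] =ᵐ[P] X * P[Y | G] :=
    condExp_mul_of_stronglyMeasurable_left hX hXY_int hY_int
  calc ∫ ω, X ω * Y ω ∂P = ∫ ω, P[X * Y | G] ω ∂P := (integral_condExp hG).symm
    _ = ∫ ω, X ω * P[Y | G] ω ∂P := integral_congr_ae hpull
    _ ≤ ∫ ω, X ω * K ∂P := by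
      refine integral_mono_ae (integrable_condExp.congr hpull) (hX_int.mul_const K) ?_
      filter_upwards [hYK] with ω hω using mul_le_mul_of_nonneg_left hω (hX_nonneg ω)
    _ = (∫ ω, X ω ∂P) * K := integral_mul_const K X

lemma integral_exp_mul_add_le {S D : Ω → ℝ} {a s lam : ℝ} (hG : G ≤ m0)
    (hS : StronglyMeasurable[G] S) (hS_int : Integrable (fun ω => exp (lam * S ω)) P)
    (ha : 0 ≤ a) (hD : AEStronglyMeasurable D P) (hD_ce : P[D | G] =ᵐ[P] fun _ => 0)
    (hD_bdd : ∀ᵐ ω ∂P, |D ω| ≤ a) (hD_var : P[fun ω => D ω ^ 2 | G] ≤ᵐ[P] fun _ => s)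
    (hlam : |lam| ≤ 1) :
    ∫ ω, exp (lam * (S ω + D ω)) ∂P
      ≤ (∫ ω, exp (lam * S ω) ∂P) * exp (exp a / 2 * lam ^ 2 * s) := by
  have hD_exp_bdd : ∀ᵐ ω ∂P, ‖exp (lam * D ω)‖ ≤ exp a := by
    filter_upwards [hD_bdd] with ω hω
    rw [norm_of_nonneg (exp_pos _).le, exp_le_exp]
    exact mul_le_of_abs_le_one_of_abs_le hlam hω
  have hD_exp_sm : AEStronglyMeasurable (fun ω => exp (lam * D ω)) P :=
    continuous_exp.comp_aestronglyMeasurable (hD.const_mul lam)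
  simp only [mul_add, exp_add]
  exact integral_mul_le_of_condExp_le_s13 hG
    (continuous_exp.comp_stronglyMeasurable (hS.const_mul lam)) (fun ω => (exp_pos _).le) hS_int
    (.of_bound hD_exp_sm _ hD_exp_bdd) (hS_int.mul_bdd hD_exp_sm hD_exp_bdd)
    (condExp_exp_mul_le hG ha hD hD_ce hD_bdd hD_var hlam)

end CondExp

theorem exp_moment_bound_martingale_general
    {Ω : Type*} [m0 : MeasurableSpace Ω] (P : Measure Ω) [IsProbabilityMeasure P]
    (m : ℕ) (F : ℕ → MeasurableSpace Ω)
    (hF_mono : ∀ i j, i ≤ j → j ≤ m → F i ≤ F j)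
    (hF_le : ∀ i, i ≤ m → F i ≤ m0)
    (d : ℕ → Ω → ℝ) (a : ℝ) (ha : 0 < a) (σ : ℕ → ℝ)
    (hd_meas : ∀ i, 1 ≤ i → i ≤ m → StronglyMeasurable[F i] (d i))
    (hd_ce : ∀ i, 1 ≤ i → i ≤ m → P[d i | F (i - 1)] =ᵐ[P] fun _ => (0 : ℝ))
    (hd_bdd : ∀ i, 1 ≤ i → i ≤ m → ∀ᵐ ω ∂P, |d i ω| ≤ a)
    (hd_var : ∀ i, 1 ≤ i → i ≤ m →
      P[fun ω => (d i ω) ^ 2 | F (i - 1)] ≤ᵐ[P] fun _ => (σ i) ^ 2)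
    (lam : ℝ) (hlam : |lam| ≤ 1) :
    ∫ ω, Real.exp (lam * ∑ i ∈ Finset.Icc 1 m, d i ω) ∂P
      ≤ Real.exp ((Real.exp a / 2) * lam ^ 2 * ∑ i ∈ Finset.Icc 1 m, (σ i) ^ 2) := by
  have hd_sm : ∀ i, 1 ≤ i → i ≤ m → AEStronglyMeasurable (d i) P := fun i h1 h2 =>
    ((hd_meas i h1 h2).mono (hF_le i h2)).aestronglyMeasurable
  suffices h : ∀ n ≤ m, ∫ ω, exp (lam * ∑ i ∈ Finset.Icc 1 n, d i ω) ∂P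
      ≤ exp (exp a / 2 * lam ^ 2 * ∑ i ∈ Finset.Icc 1 n, σ i ^ 2) from h m le_rfl
  intro n hn
  induction n with
  | zero => simp
  | succ n ih =>
    have hIcc : ∀ i ∈ Finset.Icc 1 n, 1 ≤ i ∧ i ≤ m := fun i hi => by
      rw [Finset.mem_Icc] at hi; omega
    have hS : StronglyMeasurable[F n] fun ω => ∑ i ∈ Finset.Icc 1 n, d i ω :=
      Finset.stronglyMeasurable_fun_sum _ fun i hi => (hd_meas i (hIcc i hi).1 (hIcc i hi).2).mono
        (hF_mono i n (Finset.mem_Icc.1 hi).2 (by omega))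
    have hS_int := integrable_exp_mul_sum (P := P) (lam := lam) (Finset.Icc 1 n)
      (fun i hi => hd_sm i (hIcc i hi).1 (hIcc i hi).2)
      (fun i hi => hd_bdd i (hIcc i hi).1 (hIcc i hi).2)
    simp only [Finset.sum_Icc_succ_top (Nat.le_add_left 1 n), mul_add _ _ (σ _ ^ 2), exp_add]
    calc _ ≤ (∫ ω, exp (lam * ∑ i ∈ Finset.Icc 1 n, d i ω) ∂P)
          * exp (exp a / 2 * lam ^ 2 * σ (n + 1) ^ 2) :=
        integral_exp_mul_add_le (hF_le n (by omega)) hS hS_int ha.le (hd_sm _ (by omega) hn)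
          (hd_ce _ (by omega) hn) (hd_bdd _ (by omega) hn) (hd_var _ (by omega) hn) hlam
      _ ≤ _ := by gcongr; exact ih (by omega)

/-- Martingale form of the exponential moment inequality: for a bounded martingale
difference sequence `d_i` with conditional variances bounded by `σ_i²`, and `|λ| ≤ 1`,
`E exp(λ ∑ d_i) ≤ exp((eᵃ/2) λ² ∑ σ_i²)`. -/
theorem exp_moment_bound_martingale
    {Ω : Type*} [m0 : MeasurableSpace Ω] (P : Measure Ω) [IsProbabilityMeasure P]
    (m : ℕ) (F : ℕ → MeasurableSpace Ω)
    (hF_mono : ∀ i j, i ≤ j → j ≤ m → F i ≤ F j)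
    (hF_le : ∀ i, i ≤ m → F i ≤ m0)
    (d : ℕ → Ω → ℝ) (a : ℝ) (ha : 0 < a) (σ : ℕ → ℝ) (hσ : ∀ i, 0 ≤ σ i)
    (hd_meas : ∀ i, 1 ≤ i → i ≤ m → StronglyMeasurable[F i] (d i))
    (hd_int : ∀ i, 1 ≤ i → i ≤ m → Integrable (d i) P)
    (hd_ce : ∀ i, 1 ≤ i → i ≤ m → P[d i | F (i - 1)] =ᵐ[P] fun _ => (0 : ℝ))
    (hd_bdd : ∀ i, 1 ≤ i → i ≤ m → ∀ᵐ ω ∂P, |d i ω| ≤ a)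
    (hd_var : ∀ i, 1 ≤ i → i ≤ m →
      P[fun ω => (d i ω) ^ 2 | F (i - 1)] ≤ᵐ[P] fun _ => (σ i) ^ 2)
    (lam : ℝ) (hlam : |lam| ≤ 1) :
    ∫ ω, Real.exp (lam * ∑ i ∈ Finset.Icc 1 m, d i ω) ∂P
      ≤ Real.exp ((Real.exp a / 2) * lam ^ 2 * ∑ i ∈ Finset.Icc 1 m, (σ i) ^ 2) :=
  exp_moment_bound_martingale_general (m0 := m0) P m F hF_mono hF_le d a ha σ hd_meas hd_ce hd_bdd
    hd_var lam hlam
end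

section
/- Let p be a probability density on ℝ that is continuous and strictly positive everywhere, let M > 0, and let f: ℝ → ℝ be measurable with sup_x |f(x)| ≤ M. Let ψ be a probability density that is invariant for f. Then ψ(x) ≥ inf_{u ∈ [−M, M]} p(x − u) for almost every x; in particular, for every Borel set B ⊆ ℝ, ∫_B ψ(x) dx ≥ ∫_B inf_{u ∈ [−M, M]} p(x − u) dx. -/
open MeasureTheory Real

/-- The stationary density of an autoregressive process with `‖f‖_∞ ≤ M` is bounded
below by `inf_{u ∈ [-M, M]} p(· - u)` almost everywhere, and hence on Borel sets. -/
theorem stationary_density_minorized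
    (p : ℝ → ℝ) (hp_cont : Continuous p) (hp_pos : ∀ x, 0 < p x)
    (hp_int : ∫ x, p x = 1)
    (M : ℝ) (hM : 0 < M)
    (f : ℝ → ℝ) (hf_meas : Measurable f) (hf_bdd : ∀ x, |f x| ≤ M)
    (ψ : ℝ → ℝ) (hψ_meas : Measurable ψ) (hψ_nonneg : ∀ x, 0 ≤ ψ x)
    (hψ_int : ∫ x, ψ x = 1)
    (hinv : ∀ᵐ x ∂(volume : Measure ℝ), ψ x = ∫ y, p (x - f y) * ψ y) :
    (∀ᵐ x ∂(volume : Measure ℝ), sInf ((fun u => p (x - u)) '' Set.Icc (-M) M) ≤ ψ x) ∧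
    (∀ B : Set ℝ, MeasurableSet B →
      ∫ x in B, sInf ((fun u => p (x - u)) '' Set.Icc (-M) M) ≤ ∫ x in B, ψ x) := by
  set c : ℝ → ℝ := fun x => sInf ((fun u => p (x - u)) '' Set.Icc (-M) M) with hc
  have hMIcc : (Set.Icc (-M) M).Nonempty := ⟨0, by constructor <;> linarith⟩
  have hbdd : ∀ x, BddBelow ((fun u => p (x - u)) '' Set.Icc (-M) M) := by
    intro x
    exact ⟨0, fun b hb => by obtain ⟨u, _, rfl⟩ := hb; exact (hp_pos _).le⟩
  have hc_nonneg : ∀ x, 0 ≤ c x := by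
    intro x
    apply le_csInf (hMIcc.image _)
    rintro b ⟨u, _, rfl⟩
    exact (hp_pos _).le
  have hc_le : ∀ x y, c x ≤ p (x - f y) := by
    intro x y
    apply csInf_le (hbdd x)
    exact ⟨f y, abs_le.mp (hf_bdd y), rfl⟩
  -- p and ψ are integrable
  have hp_integrable : Integrable p := by
    by_contra h
    rw [integral_undef h] at hp_int
    norm_num at hp_int
  have hψ_integrable : Integrable ψ := by
    by_contra h
    rw [integral_undef h] at hψ_int
    norm_num at hψ_int
  -- the joint kernel, in ℝ≥0∞
  have hF_meas : Measurable fun z : ℝ × ℝ =>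
      ENNReal.ofReal (p (z.1 - f z.2)) * ENNReal.ofReal (ψ z.2) :=
    ((ENNReal.measurable_ofReal.comp
        (hp_cont.measurable.comp (measurable_fst.sub (hf_meas.comp measurable_snd)))).mul
      (ENNReal.measurable_ofReal.comp (hψ_meas.comp measurable_snd)))
  have hp_lint : ∀ a : ℝ, ∫⁻ x, ENNReal.ofReal (p (x - a)) = 1 := by
    intro a
    rw [lintegral_sub_right_eq_self (fun x => ENNReal.ofReal (p x)) a,
      ← ofReal_integral_eq_lintegral_ofReal hp_integrable
        (Filter.Eventually.of_forall fun x => (hp_pos x).le), hp_int, ENNReal.ofReal_one]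
  have hψ_lint : ∫⁻ y, ENNReal.ofReal (ψ y) = 1 := by
    rw [← ofReal_integral_eq_lintegral_ofReal hψ_integrable
      (Filter.Eventually.of_forall fun x => hψ_nonneg x), hψ_int, ENNReal.ofReal_one]
  have hswap : ∫⁻ x, ∫⁻ y, ENNReal.ofReal (p (x - f y)) * ENNReal.ofReal (ψ y) = 1 := by
    rw [lintegral_lintegral_swap hF_meas.aemeasurable]
    calc ∫⁻ y, ∫⁻ x, ENNReal.ofReal (p (x - f y)) * ENNReal.ofReal (ψ y)
        = ∫⁻ y, (∫⁻ x, ENNReal.ofReal (p (x - f y))) * ENNReal.ofReal (ψ y) := by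
          congr 1; funext y; rw [lintegral_mul_const' _ _ ENNReal.ofReal_ne_top]
      _ = ∫⁻ y, ENNReal.ofReal (ψ y) := by
          congr 1; funext y; rw [hp_lint (f y), one_mul]
      _ = 1 := hψ_lint
  have hfin : ∀ᵐ x ∂(volume : Measure ℝ),
      ∫⁻ y, ENNReal.ofReal (p (x - f y)) * ENNReal.ofReal (ψ y) < ⊤ := by
    apply ae_lt_top
    · exact hF_meas.lintegral_prod_right'
    · rw [hswap]; exact ENNReal.one_ne_top
  have hmain : ∀ᵐ x ∂(volume : Measure ℝ), c x ≤ ψ x := by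
    filter_upwards [hinv, hfin] with x hx hxfin
    have hint : Integrable (fun y => p (x - f y) * ψ y) := by
      refine ⟨((hp_cont.measurable.comp (measurable_const.sub hf_meas)).mul
        hψ_meas).aestronglyMeasurable, ?_⟩
      rw [hasFiniteIntegral_iff_ofReal (Filter.Eventually.of_forall fun y =>
        mul_nonneg (hp_pos _).le (hψ_nonneg y))]
      calc ∫⁻ y, ENNReal.ofReal (p (x - f y) * ψ y)
          = ∫⁻ y, ENNReal.ofReal (p (x - f y)) * ENNReal.ofReal (ψ y) := by
            congr 1; funext y; rw [ENNReal.ofReal_mul (hp_pos _).le]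
        _ < ⊤ := hxfin
    have h1 : ∫ y, c x * ψ y ≤ ∫ y, p (x - f y) * ψ y := by
      apply integral_mono (hψ_integrable.const_mul _) hint
      intro y
      exact mul_le_mul_of_nonneg_right (hc_le x y) (hψ_nonneg y)
    rw [integral_const_mul, hψ_int, mul_one] at h1
    rw [hx]
    exact h1
  refine ⟨hmain, fun B hB => ?_⟩
  apply integral_mono_of_nonneg
  · exact Filter.Eventually.of_forall fun x => hc_nonneg x
  · exact hψ_integrable.restrict
  · exact ae_restrict_of_ae hmain
end
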